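/- arXiv:1306.3577 — 11 statements merged into one kernel-verified Lean document; each statement's English description precedes it below -/
import Mathlib

section
/- Let e : ℝ → ℝ. The set A = {x ∈ ℝ : e(x) > 0} is connectable if and only if there do not exist three points x₁ < x₂ < x₃ in ℝ with e(x₁) > 0, e(x₂) < 0, and e(x₃) > 0. -/
/-- The set `{x | e x > 0}` is *connectable* if it can be enlarged to a connected
subset of `{x | e x ≥ 0}` by adding zeros of `e`. -/
def Connectable (e : ℝ → ℝ) : Prop :=
  ∃ B : Set ℝ, IsPreconnected B ∧ {x : ℝ | 0 < e x} ⊆ B ∧ B ⊆ {x : ℝ | 0 ≤ e x}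

theorem connectable_iff_no_sign_change (e : ℝ → ℝ) :
    Connectable e ↔
      ¬ ∃ x₁ x₂ x₃ : ℝ, x₁ < x₂ ∧ x₂ < x₃ ∧ 0 < e x₁ ∧ e x₂ < 0 ∧ 0 < e x₃ := by
  constructor
  · rintro ⟨B, hB, hAB, hBpos⟩ ⟨x₁, x₂, x₃, h12, h23, h1, h2, h3⟩
    have hord : B.OrdConnected := hB.ordConnected
    have hx2 : x₂ ∈ B := hord.out (hAB h1) (hAB h3) ⟨h12.le, h23.le⟩
    exact absurd (hBpos hx2) (not_le.mpr h2)
  · intro h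
    refine ⟨{x | (∃ a, 0 < e a ∧ a ≤ x) ∧ (∃ b, 0 < e b ∧ x ≤ b)}, ?_, ?_, ?_⟩
    · refine Set.OrdConnected.isPreconnected ⟨fun x hx y hy z hz => ?_⟩
      obtain ⟨⟨a, ha, hax⟩, _⟩ := hx
      obtain ⟨_, ⟨b, hb, hyb⟩⟩ := hy
      exact ⟨⟨a, ha, hax.trans hz.1⟩, ⟨b, hb, hz.2.trans hyb⟩⟩
    · intro x hx
      exact ⟨⟨x, hx, le_refl x⟩, ⟨x, hx, le_refl x⟩⟩
    · rintro x ⟨⟨a, ha, hax⟩, ⟨b, hb, hxb⟩⟩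
      simp only [Set.mem_setOf_eq]
      by_contra hneg
      push_neg at hneg
      have hax' : a < x := hax.lt_of_ne (by rintro rfl; exact absurd hneg (not_lt.mpr ha.le))
      have hxb' : x < b := hxb.lt_of_ne (by rintro rfl; exact absurd hneg (not_lt.mpr hb.le))
      exact h ⟨a, x, b, hax', hxb', ha, hneg, hb⟩
end

section
/- Let e_k : ℝ → ℝ (k ∈ ℕ) and e : ℝ → ℝ be functions such that e_k(x) → e(x) as k → ∞ for every x ∈ ℝ. If for every k the set {x ∈ ℝ : e_k(x) > 0} is connectable, then the set {x ∈ ℝ : e(x) > 0} is connectable. -/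
open Filter

lemma connectable_iff (e : ℝ → ℝ) :
    Connectable e ↔ ∀ a b c : ℝ, 0 < e a → 0 < e b → a ≤ c → c ≤ b → 0 ≤ e c := by
  constructor
  · rintro ⟨B, hB, hsub, hsup⟩ a b c ha hb hac hcb
    exact hsup (hB.Icc_subset (hsub ha) (hsub hb) ⟨hac, hcb⟩)
  · intro h
    refine ⟨{c | ∃ a, 0 < e a ∧ ∃ b, 0 < e b ∧ a ≤ c ∧ c ≤ b}, ?_, ?_, ?_⟩
    · rw [isPreconnected_iff_ordConnected]
      constructor
      rintro x ⟨a, ha, _, _, hax, _⟩ y ⟨_, _, b, hb, _, hyb⟩ z ⟨hxz, hzy⟩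
      exact ⟨a, ha, b, hb, hax.trans hxz, hzy.trans hyb⟩
    · intro x hx
      exact ⟨x, hx, x, hx, le_refl x, le_refl x⟩
    · rintro c ⟨a, ha, b, hb, hac, hcb⟩
      exact h a b c ha hb hac hcb

theorem connectable_of_pointwise_limit (e : ℕ → ℝ → ℝ) (e' : ℝ → ℝ)
    (hconv : ∀ x : ℝ, Tendsto (fun k => e k x) atTop (nhds (e' x)))
    (hconn : ∀ k : ℕ, Connectable (e k)) :
    Connectable e' := by
  rw [connectable_iff]
  intro a b c ha hb hac hcb
  have hA : ∀ᶠ k in atTop, 0 < e k a := (hconv a).eventually (eventually_gt_nhds ha)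
  have hB : ∀ᶠ k in atTop, 0 < e k b := (hconv b).eventually (eventually_gt_nhds hb)
  have hC : ∀ᶠ k in atTop, 0 ≤ e k c := by
    filter_upwards [hA, hB] with k hka hkb
    exact (connectable_iff (e k)).1 (hconn k) a b c hka hkb hac hcb
  exact ge_of_tendsto (hconv c) hC
end

section
/- Let ρ : ℝ → ℝ be continuous and nonnegative with ρ(x) → 0 as |x| → ∞, and suppose that for every x₀ ∈ ℝ the set {x ∈ ℝ : ρ(x) − ρ(x − x₀) > 0} is connectable. Then there exists x̄ ∈ ℝ such that ρ is nondecreasing on (−∞, x̄] and nonincreasing on [x̄, ∞). -/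
open Filter

private lemma exists_pos_step (ρ : ℝ → ℝ) (x₀ s : ℝ) (n : ℕ)
    (h : ρ (s - (n : ℝ) * x₀) < ρ s) :
    ∃ k : ℕ, k < n ∧ 0 < ρ (s - (k : ℝ) * x₀) - ρ (s - (k : ℝ) * x₀ - x₀) := by
  by_contra hc
  push_neg at hc
  have key : ∀ m : ℕ, m ≤ n → ρ s ≤ ρ (s - (m : ℝ) * x₀) := by
    intro m hm
    induction m with
    | zero => simp
    | succ k ih =>
      have h1 := ih (le_of_lt (Nat.lt_of_succ_le hm))
      have h2 := hc k (Nat.lt_of_succ_le hm)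
      have heq : s - (k : ℝ) * x₀ - x₀ = s - ((k + 1 : ℕ) : ℝ) * x₀ := by push_cast; ring
      rw [heq] at h2
      linarith
  exact absurd (key n le_rfl) (not_le.mpr h)

private lemma core_lemma (ρ : ℝ → ℝ) (hnn : ∀ x : ℝ, 0 ≤ ρ x)
    (hconn : ∀ x₀ : ℝ, Connectable (fun x => ρ x - ρ (x - x₀)))
    (hdecay : ∀ ε : ℝ, 0 < ε → ∃ R : ℝ, ∀ x : ℝ, x ≤ R → ρ x < ε)
    (u v w : ℝ) (huv : u < v) (hvw : v < w)
    (h1 : ρ v < ρ u) (h2 : ∀ x ∈ Set.Ioc u v, ρ x < ρ w) : False := by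
  set x₀ : ℝ := v - u with hx₀def
  have hx₀ : 0 < x₀ := sub_pos.mpr huv
  obtain ⟨B, hBpre, hSB, hBe⟩ := hconn x₀
  -- a point of B to the left of v
  have hρu : 0 < ρ u := lt_of_le_of_lt (hnn v) h1
  obtain ⟨R, hR⟩ := hdecay (ρ u) hρu
  set n : ℕ := ⌈(u - R) / x₀⌉₊ with hn
  have hnle : (u - R) / x₀ ≤ (n : ℝ) := Nat.le_ceil _
  have hle : u - (n : ℝ) * x₀ ≤ R := by
    have := (div_le_iff₀ hx₀).mp hnle
    linarith
  obtain ⟨k, hk, hkpos⟩ := exists_pos_step ρ x₀ u n (lt_of_lt_of_le (hR _ hle) le_rfl)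
  set p : ℝ := u - (k : ℝ) * x₀ with hp
  have hpB : p ∈ B := hSB (by simpa using hkpos)
  have hpu : p ≤ u := by
    have : 0 ≤ (k : ℝ) * x₀ := mul_nonneg (Nat.cast_nonneg _) hx₀.le
    simp [hp]; linarith
  -- a point of B to the right of v
  set m : ℕ := ⌈(w - v) / x₀⌉₊ with hm
  have hm1 : (w - v) / x₀ ≤ (m : ℝ) := Nat.le_ceil _
  have hm2 : (m : ℝ) < (w - v) / x₀ + 1 :=
    Nat.ceil_lt_add_one (div_nonneg (by linarith) hx₀.le)
  have hr1 : w - (m : ℝ) * x₀ ≤ v := by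
    have := (div_le_iff₀ hx₀).mp hm1
    linarith
  have hr2 : u < w - (m : ℝ) * x₀ := by
    have h3 : (m : ℝ) * x₀ < w - v + x₀ := by
      calc (m : ℝ) * x₀ < ((w - v) / x₀ + 1) * x₀ := mul_lt_mul_of_pos_right hm2 hx₀
        _ = w - v + x₀ := by
          rw [add_mul, div_mul_cancel₀ _ hx₀.ne', one_mul]
    have hx : x₀ = v - u := hx₀def
    linarith
  have hrch : ρ (w - (m : ℝ) * x₀) < ρ w := h2 _ ⟨hr2, hr1⟩
  obtain ⟨j, hj, hjpos⟩ := exists_pos_step ρ x₀ w m hrch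
  set q : ℝ := w - (j : ℝ) * x₀ with hq
  have hqB : q ∈ B := hSB (by simpa using hjpos)
  have hvq : v < q := by
    have hjm : (j : ℝ) + 1 ≤ (m : ℝ) := by exact_mod_cast Nat.succ_le_of_lt hj
    have hmul : (j : ℝ) * x₀ ≤ ((m : ℝ) - 1) * x₀ :=
      mul_le_mul_of_nonneg_right (by linarith) hx₀.le
    have hexp : ((m : ℝ) - 1) * x₀ = (m : ℝ) * x₀ - x₀ := by ring
    simp only [hq]
    have hux : v = u + x₀ := by rw [hx₀def]; ring
    linarith
  have hvB : v ∈ B :=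
    hBpre.ordConnected.out hpB hqB ⟨le_trans hpu huv.le, hvq.le⟩
  have hge := hBe hvB
  have hvx : v - x₀ = u := by simp [hx₀def]
  simp only [Set.mem_setOf_eq, hvx] at hge
  linarith

private lemma conn_neg (ρ : ℝ → ℝ)
    (hconn : ∀ x₀ : ℝ, Connectable (fun x => ρ x - ρ (x - x₀))) :
    ∀ x₀ : ℝ, Connectable (fun x => ρ (-x) - ρ (-(x - x₀))) := by
  intro x₀
  obtain ⟨B, hBpre, hSB, hBe⟩ := hconn (-x₀)
  refine ⟨(fun y => -y) '' B, hBpre.image _ continuous_neg.continuousOn, ?_, ?_⟩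
  · intro x hx
    refine ⟨-x, hSB ?_, by ring⟩
    simp only [Set.mem_setOf_eq] at hx ⊢
    have : -x - -x₀ = -(x - x₀) := by ring
    rw [this]
    exact hx
  · rintro x ⟨b, hb, rfl⟩
    have := hBe hb
    simp only [Set.mem_setOf_eq] at this ⊢
    have h1 : -(-b) = b := by ring
    have h2 : -(-b - x₀) = b - -x₀ := by ring
    rw [h1, h2]
    exact this

private lemma quasiconcave (ρ : ℝ → ℝ) (hcont : Continuous ρ) (hnn : ∀ x : ℝ, 0 ≤ ρ x)
    (hρ_lim : Tendsto ρ (cocompact ℝ) (nhds 0))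
    (hconn : ∀ x₀ : ℝ, Connectable (fun x => ρ x - ρ (x - x₀)))
    (u v w : ℝ) (huv : u < v) (hvw : v < w) : min (ρ u) (ρ w) ≤ ρ v := by
  by_contra hcon
  push_neg at hcon
  obtain ⟨hu, hw⟩ := lt_min_iff.mp hcon
  -- decay on both sides
  have hdec : ∀ ε : ℝ, 0 < ε → ∃ R : ℝ, 0 < R ∧ ∀ x : ℝ, R ≤ |x| → ρ x < ε := by
    intro ε hε
    have hmem : {x : ℝ | ρ x < ε} ∈ cocompact ℝ := hρ_lim (Iio_mem_nhds hε)
    obtain ⟨K, hK, hKsub⟩ := mem_cocompact.mp hmem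
    obtain ⟨r, hr⟩ := hK.isBounded.subset_closedBall 0
    refine ⟨|r| + 1, by positivity, fun x hx => ?_⟩
    apply hKsub
    intro hxK
    have := hr hxK
    rw [Metric.mem_closedBall, Real.dist_eq, sub_zero] at this
    have : |x| ≤ |r| := le_trans this (le_abs_self r)
    linarith
  have hdecay_left : ∀ ε : ℝ, 0 < ε → ∃ R : ℝ, ∀ x : ℝ, x ≤ R → ρ x < ε := by
    intro ε hε
    obtain ⟨R, hR0, hR⟩ := hdec ε hε
    exact ⟨-R, fun x hx => hR x (by rw [abs_of_nonpos (by linarith)]; linarith)⟩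
  have hdecay_right : ∀ ε : ℝ, 0 < ε → ∃ R : ℝ, ∀ x : ℝ, x ≤ R → ρ (-x) < ε := by
    intro ε hε
    obtain ⟨R, hR0, hR⟩ := hdec ε hε
    refine ⟨-R, fun x hx => hR (-x) ?_⟩
    rw [abs_of_nonneg (by linarith)]; linarith
  -- maxima on both intervals
  obtain ⟨um, humI, hum⟩ := isCompact_Icc.exists_isMaxOn (Set.nonempty_Icc.mpr huv.le)
    hcont.continuousOn
  obtain ⟨wm, hwmI, hwm⟩ := isCompact_Icc.exists_isMaxOn (Set.nonempty_Icc.mpr hvw.le)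
    hcont.continuousOn
  rw [isMaxOn_iff] at hum hwm
  have humu : ρ u ≤ ρ um := hum u ⟨le_rfl, huv.le⟩
  have hwmw : ρ w ≤ ρ wm := hwm w ⟨hvw.le, le_rfl⟩
  have humv : um < v := lt_of_le_of_ne humI.2 (fun h => by rw [h] at humu; linarith)
  have hvwm : v < wm := lt_of_le_of_ne hwmI.1 (fun h => by rw [← h] at hwmw; linarith)
  rcases le_or_gt (ρ um) (ρ wm) with hcase | hcase
  · -- right max dominates: use last point on the left attaining the left max
    set T : Set ℝ := Set.Icc u v ∩ {x | ρ um ≤ ρ x} with hT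
    have hTcpt : IsCompact T :=
      isCompact_Icc.inter_right (isClosed_le continuous_const hcont)
    have hTne : T.Nonempty := ⟨um, humI, Set.mem_setOf.mpr le_rfl⟩
    set u' : ℝ := sSup T with hu'
    have hu'T : u' ∈ T := hTcpt.sSup_mem hTne
    have hu'ge : ρ um ≤ ρ u' := hu'T.2
    have hu'v : u' < v :=
      lt_of_le_of_ne hu'T.1.2 (fun h => by rw [h] at hu'ge; linarith)
    refine core_lemma ρ hnn hconn hdecay_left u' v wm hu'v hvwm
      (by linarith) ?_
    intro x hx
    have hxI : x ∈ Set.Icc u v := ⟨le_trans hu'T.1.1 hx.1.le, hx.2⟩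
    have hxlt : ρ x < ρ um := by
      rcases lt_or_ge (ρ x) (ρ um) with h | h
      · exact h
      · exact absurd (le_csSup hTcpt.bddAbove ⟨hxI, h⟩) (not_le.mpr hx.1)
    linarith
  · -- left max dominates: apply the core lemma to the reflected function
    refine core_lemma (fun y => ρ (-y)) (fun x => hnn _) (conn_neg ρ hconn) hdecay_right
      (-wm) (-v) (-um) (by linarith) (by linarith) (by simp; linarith) ?_
    intro x hx
    simp only [neg_neg]
    have hxI : -x ∈ Set.Icc v w := ⟨by linarith [hx.2], by linarith [hx.1, hwmI.2]⟩
    have := hwm (-x) hxI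
    linarith

theorem fundamental_solution_unimodal (ρ : ℝ → ℝ)
    (hρ_cont : Continuous ρ) (hρ_nn : ∀ x : ℝ, 0 ≤ ρ x)
    (hρ_lim : Tendsto ρ (cocompact ℝ) (nhds 0))
    (hconn : ∀ x₀ : ℝ, Connectable (fun x => ρ x - ρ (x - x₀))) :
    ∃ xbar : ℝ, MonotoneOn ρ (Set.Iic xbar) ∧ AntitoneOn ρ (Set.Ici xbar) := by
  by_cases hzero : ∀ x : ℝ, ρ x = 0
  · exact ⟨0, fun a _ b _ _ => by rw [hzero a, hzero b],
      fun a _ b _ _ => by rw [hzero a, hzero b]⟩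
  push_neg at hzero
  obtain ⟨x₁, hx₁⟩ := hzero
  have hx₁pos : 0 < ρ x₁ := lt_of_le_of_ne (hρ_nn x₁) (Ne.symm hx₁)
  -- the global max is attained
  have hmem : {x : ℝ | ρ x < ρ x₁} ∈ cocompact ℝ := hρ_lim (Iio_mem_nhds hx₁pos)
  obtain ⟨K, hK, hKsub⟩ := mem_cocompact.mp hmem
  have hcpt : IsCompact (K ∪ {x₁}) := hK.union isCompact_singleton
  obtain ⟨xbar, hxbarI, hxbar⟩ := hcpt.exists_isMaxOn ⟨x₁, Or.inr rfl⟩ hρ_cont.continuousOn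
  rw [isMaxOn_iff] at hxbar
  have hmax : ∀ x : ℝ, ρ x ≤ ρ xbar := by
    intro x
    by_cases hxK : x ∈ K ∪ {x₁}
    · exact hxbar x hxK
    · have hx1 : ρ x < ρ x₁ := hKsub (fun h => hxK (Or.inl h))
      exact le_trans hx1.le (hxbar x₁ (Or.inr rfl))
  refine ⟨xbar, ?_, ?_⟩
  · intro a ha b hb hab
    rcases eq_or_lt_of_le hab with rfl | hab'
    · exact le_rfl
    rcases eq_or_lt_of_le (Set.mem_Iic.mp hb) with rfl | hbx
    · exact hmax a
    have := quasiconcave ρ hρ_cont hρ_nn hρ_lim hconn a b xbar hab' hbx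
    rw [min_eq_left (hmax _)] at this
    exact this
  · intro a ha b hb hab
    rcases eq_or_lt_of_le hab with rfl | hab'
    · exact le_rfl
    rcases eq_or_lt_of_le (Set.mem_Ici.mp ha) with rfl | hax
    · exact hmax b
    have := quasiconcave ρ hρ_cont hρ_nn hρ_lim hconn xbar a b hax hab'
    rw [min_eq_right (hmax _)] at this
    exact this
end

section
/- Fix t > 0. Let u : ℝ → ℝ be a nonnegative bounded function. Then the following are equivalent: (i) the Oleinik inequality holds, i.e., (f'(u(x)) − f'(u(y)))/(x − y) ≤ 1/t for all x ≠ y; (ii) for every m > 0 and every x₀ ∈ ℝ, the set {x ∈ ℝ : ρ_m(x − x₀, t) − u(x) > 0} is connectable. -/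
open Filter MeasureTheory

theorem oleinik_iff_connectable
    (t : ℝ) (ht : 0 < t)
    (f f' f'' g : ℝ → ℝ)
    (hf' : ∀ z : ℝ, HasDerivAt f (f' z) z)
    (hf'' : ∀ z : ℝ, HasDerivAt f' (f'' z) z)
    (hf0 : f 0 = 0) (hf'0 : f' 0 = 0)
    (hf''pos : ∀ z : ℝ, 0 ≤ z → 0 < f'' z)
    (hf'top : Tendsto f' atTop atTop)
    -- g is the inverse of f' restricted to [0,∞)
    (hg : ∀ x : ℝ, 0 ≤ x → 0 ≤ g x ∧ f' (g x) = x)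
    (hg' : ∀ z : ℝ, 0 ≤ z → g (f' z) = z)
    -- a m τ is the unique positive number with ∫₀^{a m τ} g(x/τ) dx = m
    (a : ℝ → ℝ → ℝ)
    (ha : ∀ m τ : ℝ, 0 < m → 0 < τ →
      0 < a m τ ∧ (∫ x in (0:ℝ)..(a m τ), g (x / τ)) = m)
    -- the N-wave fundamental solution
    (ρ : ℝ → ℝ → ℝ → ℝ)
    (hρ : ∀ m x τ : ℝ, ρ m x τ = if 0 < x ∧ x < a m τ then g (x / τ) else 0)
    (u : ℝ → ℝ) (hu_nn : ∀ x : ℝ, 0 ≤ u x) (hu_bdd : ∃ M : ℝ, ∀ x : ℝ, u x ≤ M) :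
    (∀ x y : ℝ, x ≠ y → (f' (u x) - f' (u y)) / (x - y) ≤ 1 / t) ↔
      (∀ m x₀ : ℝ, 0 < m → Connectable (fun x => ρ m (x - x₀) t - u x)) := by
  -- f' is strictly monotone on [0, ∞)
  have hf'mono : StrictMonoOn f' (Set.Ici (0:ℝ)) := by
    apply strictMonoOn_of_deriv_pos (convex_Ici 0)
    · exact fun x _ => (hf'' x).differentiableAt.continuousAt.continuousWithinAt
    · intro x hx
      rw [interior_Ici] at hx
      rw [(hf'' x).deriv]
      exact hf''pos x hx.le
  have hf'nonneg : ∀ z : ℝ, 0 ≤ z → 0 ≤ f' z := by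
    intro z hz
    rcases eq_or_lt_of_le hz with h | h
    · rw [← h, hf'0]
    · rw [← hf'0]
      exact (hf'mono (Set.self_mem_Ici) hz h).le
  have hgmono : ∀ s s' : ℝ, 0 ≤ s → s ≤ s' → g s ≤ g s' := by
    intro s s' hs hss'
    by_contra h
    push_neg at h
    have h2 := hf'mono (hg s' (hs.trans hss')).1 (hg s hs).1 h
    rw [(hg s hs).2, (hg s' (hs.trans hss')).2] at h2
    linarith
  have hgstrict : ∀ s s' : ℝ, 0 ≤ s → s < s' → g s < g s' := by
    intro s s' hs hss'
    by_contra h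
    push_neg at h
    have h2 := hf'mono.monotoneOn (hg s' (hs.trans hss'.le)).1 (hg s hs).1 h
    rw [(hg s hs).2, (hg s' (hs.trans hss'.le)).2] at h2
    linarith
  constructor
  · -- Oleinik ⇒ connectable
    intro hO m x₀ hm
    set A := a m t with hAdef
    have hA : 0 < A := (ha m t hm ht).1
    refine ⟨{x : ℝ | x₀ < x ∧ x < x₀ + A ∧ t * f' (u x) ≤ x - x₀}, ?_, ?_, ?_⟩
    · -- preconnected, via ord-connectedness
      apply Set.OrdConnected.isPreconnected
      constructor
      intro x1 hx1 x2 hx2 z hz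
      refine ⟨hx1.1.trans_le hz.1, lt_of_le_of_lt hz.2 hx2.2.1, ?_⟩
      rcases eq_or_lt_of_le hz.1 with h | h
      · rw [← h]; exact hx1.2.2
      · -- use Oleinik between z and x1
        have hO' := hO z x1 (ne_of_gt h)
        rw [div_le_div_iff₀ (by linarith) ht] at hO'
        have := hx1.2.2
        nlinarith
    · -- {e > 0} ⊆ B
      intro x hx
      simp only [Set.mem_setOf_eq] at hx ⊢
      have hρx : 0 < ρ m (x - x₀) t := lt_of_le_of_lt (hu_nn x) (by linarith)
      rw [hρ] at hρx hx
      by_cases hc : 0 < x - x₀ ∧ x - x₀ < a m t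
      · rw [if_pos hc] at hx
        refine ⟨by linarith [hc.1], by linarith [hc.2], ?_⟩
        -- g ((x-x₀)/t) > u x ⇒ f'(u x) < (x-x₀)/t
        have hst : (0:ℝ) ≤ (x - x₀) / t := le_of_lt (div_pos hc.1 ht)
        have hux : u x < g ((x - x₀) / t) := by linarith
        have := hf'mono.monotoneOn (hg _ hst).1 (Set.mem_Ici.mpr (hu_nn x))
        by_contra hcon
        push_neg at hcon
        have hle : (x - x₀) / t < f' (u x) := by
          rw [div_lt_iff₀ ht]
          linarith
        have h2 : f' (g ((x - x₀)/t)) < f' (u x) := by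
          rw [(hg _ hst).2]; exact hle
        have h3 := hf'mono.monotoneOn (Set.mem_Ici.mpr (hu_nn x)) (hg _ hst).1 hux.le
        linarith
      · rw [if_neg hc] at hρx; linarith
    · -- B ⊆ {e ≥ 0}
      intro x hx
      simp only [Set.mem_setOf_eq] at hx ⊢
      obtain ⟨h1, h2, h3⟩ := hx
      have hc : 0 < x - x₀ ∧ x - x₀ < a m t := ⟨by linarith, by linarith⟩
      rw [hρ, if_pos hc]
      have hfu : f' (u x) ≤ (x - x₀) / t := by
        rw [le_div_iff₀ ht]
        linarith
      have hfu0 : (0:ℝ) ≤ f' (u x) := hf'nonneg _ (hu_nn x)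
      have := hgmono _ _ hfu0 hfu
      rw [hg' _ (hu_nn x)] at this
      linarith
  · -- connectable ⇒ Oleinik
    intro hC
    by_contra hcon
    push_neg at hcon
    obtain ⟨x, y, hxy, hlt⟩ := hcon
    obtain ⟨M, hM⟩ := hu_bdd
    -- reduce to the case y < x with f'(u x) - f'(u y) > (x - y)/t
    have key : ∀ p q : ℝ, q < p → (p - q) / t < f' (u p) - f' (u q) → False := by
      intro p q hqp hviol
      set δ : ℝ := f' (u p) - f' (u q) - (p - q) / t with hδdef
      have hδ : 0 < δ := by rw [hδdef]; linarith
      set ε : ℝ := δ / 2 with hεdef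
      have hε : 0 < ε := by positivity
      set x₀ : ℝ := q - t * (f' (u q) + ε) with hx₀def
      have hfq0 : (0:ℝ) ≤ f' (u q) := hf'nonneg _ (hu_nn q)
      have hfp0 : (0:ℝ) ≤ f' (u p) := hf'nonneg _ (hu_nn p)
      have hq0 : q - x₀ = t * (f' (u q) + ε) := by rw [hx₀def]; ring
      have hqpos : 0 < q - x₀ := by rw [hq0]; positivity
      have hppos : 0 < p - x₀ := by linarith
      -- choose w large
      obtain ⟨w, hw1, hw2⟩ :=
        ((hf'top.eventually_ge_atTop ((p - x₀) / t + 1)).and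
          (eventually_ge_atTop (max (M + 1) 0))).exists
      have hw0 : (0:ℝ) ≤ w := le_trans (le_max_right _ _) hw2
      have hwM : M + 1 ≤ w := le_trans (le_max_left _ _) hw2
      set L : ℝ := t * f' w with hLdef
      have hLp : p - x₀ < L := by
        rw [hLdef]
        have : (p - x₀) / t < f' w := by linarith
        rw [div_lt_iff₀ ht] at this
        linarith
      have hL0 : 0 < L := by linarith
      -- choose m so that a m t > L
      set m : ℝ := (∫ s in (0:ℝ)..L, g (s / t)) + 1 with hmdef
      have hint_nonneg : (0:ℝ) ≤ ∫ s in (0:ℝ)..L, g (s / t) := by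
        apply intervalIntegral.integral_nonneg hL0.le
        intro s hs
        exact (hg _ (div_nonneg hs.1 ht.le)).1
      have hm : 0 < m := by rw [hmdef]; linarith
      have hAL : L < a m t := by
        by_contra hAL
        push_neg at hAL
        have hA := ha m t hm ht
        have hInt : IntervalIntegrable (fun s => g (s / t)) volume 0 L := by
          apply MonotoneOn.intervalIntegrable
          intro s1 hs1 s2 hs2 h12
          rw [Set.uIcc_of_le hL0.le] at hs1 hs2
          exact hgmono _ _ (div_nonneg hs1.1 ht.le) (by gcongr)
        have hle : (∫ s in (0:ℝ)..(a m t), g (s / t)) ≤ ∫ s in (0:ℝ)..L, g (s / t) := by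
          apply intervalIntegral.integral_mono_interval le_rfl hA.1.le hAL _ hInt
          filter_upwards [ae_restrict_mem measurableSet_Ioc] with s hs
          exact (hg _ (div_nonneg hs.1.le ht.le)).1
        rw [hA.2] at hle
        rw [hmdef] at hle
        linarith
      -- the function e
      set e : ℝ → ℝ := fun z => ρ m (z - x₀) t - u z with hedef
      set z : ℝ := x₀ + L with hzdef
      have hzp : p < z := by rw [hzdef]; linarith
      -- e q > 0
      have heq : 0 < e q := by
        rw [hedef]
        simp only
        rw [hρ, if_pos ⟨hqpos, by linarith⟩]
        have : (q - x₀) / t = f' (u q) + ε := by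
          rw [hq0]; field_simp
        rw [this]
        have := hgstrict (f' (u q)) (f' (u q) + ε) hfq0 (by linarith)
        rw [hg' _ (hu_nn q)] at this
        linarith
      -- e z > 0
      have hez : 0 < e z := by
        rw [hedef]
        simp only
        have hzx : z - x₀ = L := by rw [hzdef]; ring
        rw [hρ, hzx, if_pos ⟨hL0, hAL⟩]
        have : L / t = f' w := by rw [hLdef]; field_simp
        rw [this, hg' _ hw0]
        have := hM z
        linarith
      -- e p < 0
      have hup : 0 < u p := by
        by_contra h
        push_neg at h
        have : u p = 0 := le_antisymm h (hu_nn p)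
        rw [this, hf'0] at hviol
        have : (0:ℝ) < (p - q) / t := div_pos (by linarith) ht
        linarith
      have hep : e p < 0 := by
        rw [hedef]
        simp only
        rw [hρ]
        by_cases hc : 0 < p - x₀ ∧ p - x₀ < a m t
        · rw [if_pos hc]
          have hst : (0:ℝ) ≤ (p - x₀) / t := (div_pos hppos ht).le
          have hlt2 : (p - x₀) / t < f' (u p) := by
            have h1 : (p - x₀) / t = (p - q) / t + (f' (u q) + ε) := by
              rw [hx₀def]; field_simp; ring
            have h2 : (p - q) / t = f' (u p) - f' (u q) - δ := by rw [hδdef]; ring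
            have h3 : ε < δ := by rw [hεdef]; linarith
            linarith
          have := hgstrict _ _ hst hlt2
          rw [hg' _ (hu_nn p)] at this
          linarith
        · rw [if_neg hc]; linarith
      -- derive contradiction from connectability
      obtain ⟨B, hBpre, hB1, hB2⟩ := hC m x₀ hm
      have hqB : q ∈ B := hB1 heq
      have hzB : z ∈ B := hB1 hez
      have hpB : p ∈ B := hBpre.ordConnected.out hqB hzB ⟨hqp.le, hzp.le⟩
      have := hB2 hpB
      simp only [Set.mem_setOf_eq] at this
      rw [hedef] at hep
      simp only at hep this
      linarith
    rcases lt_or_gt_of_ne hxy with h | h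
    · -- x < y : swap
      apply key y x h
      have hd : (f' (u x) - f' (u y)) / (x - y) = (f' (u y) - f' (u x)) / (y - x) := by
        rw [← neg_div_neg_eq]; ring_nf
      rw [hd] at hlt
      rw [div_lt_div_iff₀ ht (by linarith : (0:ℝ) < y - x)] at hlt
      rw [div_lt_iff₀ ht]
      nlinarith
    · apply key x y h
      rw [div_lt_div_iff₀ ht (by linarith : (0:ℝ) < x - y)] at hlt
      rw [div_lt_iff₀ ht]
      nlinarith
end

section
/- Fix t > 0 and 0 < γ < 1. Let u : ℝ → ℝ be strictly positive, bounded, and twice continuously differentiable on ℝ. Then the following are equivalent: (i) the Aronson–Bénilan inequality (d²/dx²)(𝓅 ∘ u)(x) ≥ −1/(t(γ+1)) holds for every x ∈ ℝ; (ii) for every m > 0 and every x₀ ∈ ℝ, the set {x ∈ ℝ : ρ_m(x − x₀, t) − u(x) > 0} is connectable. -/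
open MeasureTheory
open Set

private lemma c2_facts {f : ℝ → ℝ} (h : ContDiff ℝ 2 f) :
    Differentiable ℝ f ∧ Differentiable ℝ (deriv f) ∧ Continuous (deriv (deriv f)) := by
  have h' : ContDiff ℝ (1 + 1) f := by rwa [one_add_one_eq_two]
  obtain ⟨hd, -, h1⟩ := contDiff_succ_iff_deriv.1 h'
  obtain ⟨hd1, hc⟩ := contDiff_one_iff_deriv.1 h1
  exact ⟨hd, hd1, hc⟩

private lemma lemA (c : ℝ) (hc : 0 < c) (W : ℝ → ℝ)
    (hW : ContDiff ℝ 2 W) (x₁ : ℝ)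
    (h2 : 2 * c < deriv (deriv W) x₁)
    (hψ : (deriv W x₁) ^ 2 ≤ 4 * c * W x₁) :
    ∃ z g a b e : ℝ, 0 < g ∧ a < b ∧ b < e ∧
      c * (a - z) ^ 2 + g < W a ∧ W b < c * (b - z) ^ 2 + g ∧ c * (e - z) ^ 2 + g < W e := by
  obtain ⟨hWd, hWd1, hWc2⟩ := c2_facts hW
  set s := deriv W x₁ with hs
  set z := x₁ - s / (2 * c) with hz
  set g₀ := W x₁ - c * (x₁ - z) ^ 2 with hg₀
  have hx₁z : x₁ - z = s / (2 * c) := by rw [hz]; ring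
  have hcz : c * (x₁ - z) ^ 2 = s ^ 2 / (4 * c) := by rw [hx₁z]; field_simp; ring
  have hg₀0 : 0 ≤ g₀ := by
    rw [hg₀, hcz, sub_nonneg, div_le_iff₀ (by positivity)]
    nlinarith [hψ]
  set Q := fun x : ℝ => c * (x - z) ^ 2 + g₀ with hQ
  set D := fun x : ℝ => W x - Q x with hD
  have hQ' : ∀ x, HasDerivAt Q (2 * c * (x - z)) x := by
    intro x
    have h1 : HasDerivAt (fun x : ℝ => (x - z) ^ 2) (2 * (x - z)) x := by
      simpa using ((hasDerivAt_id x).sub_const z).fun_pow 2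
    have := (h1.const_mul c).add_const g₀
    exact this.congr_deriv (by ring)
  have hD' : ∀ x, HasDerivAt D (deriv W x - 2 * c * (x - z)) x :=
    fun x => ((hWd x).hasDerivAt).sub (hQ' x)
  have hderivD : deriv D = fun x => deriv W x - 2 * c * (x - z) := funext fun x => (hD' x).deriv
  have hD'x₁ : deriv D x₁ = 0 := by
    rw [hderivD]; simp only; rw [hx₁z, ← hs]; field_simp; ring
  have hD'' : ∀ x, HasDerivAt (deriv D) (deriv (deriv W) x - 2 * c) x := by
    rw [hderivD]
    intro x
    have h2' : HasDerivAt (fun x : ℝ => 2 * c * (x - z)) (2 * c) x := by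
      simpa using ((hasDerivAt_id x).sub_const z).const_mul (2 * c)
    exact ((hWd1 x).hasDerivAt).sub h2'
  have hderivD2 : ∀ x, deriv (deriv D) x = deriv (deriv W) x - 2 * c := fun x => (hD'' x).deriv
  -- find r
  obtain ⟨r, hr, hball⟩ : ∃ r > 0, ∀ x ∈ Icc (x₁ - r) (x₁ + r), 2 * c < deriv (deriv W) x := by
    have hcont : ContinuousAt (deriv (deriv W)) x₁ := hWc2.continuousAt
    have hε : 0 < (deriv (deriv W) x₁ - 2 * c) / 2 := by linarith
    obtain ⟨δ, hδ, hδ'⟩ := Metric.continuousAt_iff.1 hcont _ hε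
    refine ⟨δ / 2, by positivity, fun x hx => ?_⟩
    have hdist : dist x x₁ < δ := by
      rw [Real.dist_eq, abs_lt]
      obtain ⟨h1, h2⟩ := hx
      constructor <;> linarith
    have := hδ' hdist
    rw [Real.dist_eq, abs_lt] at this
    linarith [this.1]
  have hcontD' : Continuous (deriv D) := by
    rw [hderivD]
    exact (hWd1.continuous).sub (by continuity)
  have hcontD : Continuous D := (hWd.continuous).sub (by continuity)
  -- deriv D positive right of x₁, negative left
  have hDmono : StrictMonoOn (deriv D) (Icc (x₁ - r) (x₁ + r)) := by
    refine strictMonoOn_of_deriv_pos (convex_Icc _ _) hcontD'.continuousOn ?_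
    intro x hx
    rw [interior_Icc] at hx
    rw [hderivD2]
    have := hball x (Ioo_subset_Icc_self hx)
    linarith
  have hx₁mem : x₁ ∈ Icc (x₁ - r) (x₁ + r) := ⟨by linarith, by linarith⟩
  have hDpos : ∀ x ∈ Ioc x₁ (x₁ + r), 0 < deriv D x := by
    intro x hx
    have := hDmono hx₁mem ⟨by linarith [hx.1], hx.2⟩ hx.1
    rw [hD'x₁] at this
    exact this
  have hDneg : ∀ x ∈ Ico (x₁ - r) x₁, deriv D x < 0 := by
    intro x hx
    have := hDmono ⟨hx.1, by linarith [hx.2]⟩ hx₁mem hx.2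
    rw [hD'x₁] at this
    exact this
  have hDx₁ : D x₁ = 0 := by rw [hD, hQ]; simp only; rw [hg₀]; ring
  have hMup : StrictMonoOn D (Icc x₁ (x₁ + r)) := by
    refine strictMonoOn_of_deriv_pos (convex_Icc _ _) hcontD.continuousOn ?_
    intro x hx
    rw [interior_Icc] at hx
    exact hDpos x ⟨hx.1, hx.2.le⟩
  have hMdn : StrictAntiOn D (Icc (x₁ - r) x₁) := by
    refine strictAntiOn_of_deriv_neg (convex_Icc _ _) hcontD.continuousOn ?_
    intro x hx
    rw [interior_Icc] at hx
    exact hDneg x ⟨hx.1.le, hx.2⟩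
  have hDright : 0 < D (x₁ + r) := by
    have := hMup ⟨le_refl _, by linarith⟩ ⟨by linarith, le_refl _⟩ (by linarith)
    rwa [hDx₁] at this
  have hDleft : 0 < D (x₁ - r) := by
    have := hMdn ⟨le_refl _, by linarith⟩ ⟨by linarith, le_refl _⟩ (by linarith)
    rwa [hDx₁] at this
  set η := min (D (x₁ - r)) (D (x₁ + r)) with hη
  have hηpos : 0 < η := lt_min hDleft hDright
  have hη1 : η ≤ D (x₁ - r) := min_le_left _ _
  have hη2 : η ≤ D (x₁ + r) := min_le_right _ _
  have hd1 : D (x₁ - r) = W (x₁ - r) - (c * ((x₁ - r) - z) ^ 2 + g₀) := rfl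
  have hd2 : D x₁ = W x₁ - (c * (x₁ - z) ^ 2 + g₀) := rfl
  have hd3 : D (x₁ + r) = W (x₁ + r) - (c * ((x₁ + r) - z) ^ 2 + g₀) := rfl
  clear_value s z g₀ Q D η
  refine ⟨z, g₀ + η / 2, x₁ - r, x₁, x₁ + r, by linarith, by linarith, by linarith, ?_, ?_, ?_⟩
  · rw [hd1] at hη1
    linarith
  · rw [hd2] at hDx₁
    linarith
  · rw [hd3] at hη2
    linarith

private lemma lemB (c P₀ : ℝ) (hc : 0 < c) (hP₀ : 0 < P₀) (W : ℝ → ℝ)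
    (hW : ContDiff ℝ 2 W) (hWP : ∀ x, P₀ ≤ W x) (x₁ : ℝ)
    (hψ1 : 4 * c * W x₁ < (deriv W x₁) ^ 2) (hW'neg : deriv W x₁ < 0) :
    ∃ z g a b e : ℝ, 0 < g ∧ a < b ∧ b < e ∧
      c * (a - z) ^ 2 + g < W a ∧ W b < c * (b - z) ^ 2 + g ∧ c * (e - z) ^ 2 + g < W e := by
  obtain ⟨hWd, hWd1, hWc2⟩ := c2_facts hW
  have hWpos : ∀ x, 0 < W x := fun x => lt_of_lt_of_le hP₀ (hWP x)
  set ψ := fun x => (deriv W x) ^ 2 - 4 * c * W x with hψdef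
  have hψcont : Continuous ψ := ((hWd1.continuous).pow 2).sub (continuous_const.mul hWd.continuous)
  set S := {x : ℝ | x₁ ≤ x ∧ ψ x ≤ 0} with hSdef
  have hSne : S.Nonempty := by
    by_contra hS
    have hψpos : ∀ x, x₁ ≤ x → 0 < ψ x := by
      intro x hx
      by_contra h
      push_neg at h
      exact hS ⟨x, hx, h⟩
    have hW'neg' : ∀ y, x₁ ≤ y → deriv W y < 0 := by
      intro y hy
      by_contra h
      push_neg at h
      obtain ⟨y', hy', hy'0⟩ := intermediate_value_Icc hy (hWd1.continuous.continuousOn)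
        (show (0:ℝ) ∈ Icc (deriv W x₁) (deriv W y) from ⟨hW'neg.le, h⟩)
      have h1 := hψpos y' hy'.1
      have h2 : ψ y' = (deriv W y') ^ 2 - 4 * c * W y' := rfl
      rw [h2, hy'0] at h1
      nlinarith [hWpos y']
    set k := 2 * Real.sqrt (c * P₀) with hk
    have hkpos : 0 < k := by
      rw [hk]
      have : 0 < Real.sqrt (c * P₀) := Real.sqrt_pos.2 (by positivity)
      linarith
    have hk2 : k ^ 2 = 4 * (c * P₀) := by
      rw [hk, mul_pow, Real.sq_sqrt (by positivity : (0:ℝ) ≤ c * P₀)]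
      ring
    have hW'le : ∀ y, x₁ ≤ y → deriv W y < -k := by
      intro y hy
      have h1 := hψpos y hy
      have h2 := hW'neg' y hy
      have h2' : ψ y = (deriv W y) ^ 2 - 4 * c * W y := rfl
      rw [h2'] at h1
      have h3 : k ^ 2 < (-(deriv W y)) ^ 2 := by
        rw [hk2]
        have := hWP y
        nlinarith
      have := lt_of_pow_lt_pow_left₀ 2 (by linarith : (0:ℝ) ≤ -(deriv W y)) h3
      linarith
    have hX : x₁ < x₁ + W x₁ / k := by
      have := hWpos x₁
      have : 0 < W x₁ / k := div_pos this hkpos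
      linarith
    obtain ⟨ξ, hξ, hslope⟩ := exists_deriv_eq_slope W hX (hWd.continuous.continuousOn)
      (hWd.differentiableOn)
    rw [eq_div_iff (by linarith [hX] : x₁ + W x₁ / k - x₁ ≠ 0)] at hslope
    have hξ1 : x₁ ≤ ξ := hξ.1.le
    have h5 := hW'le ξ hξ1
    have h6 : k * (W x₁ / k) = W x₁ := mul_div_cancel₀ _ (ne_of_gt hkpos)
    have h7 : x₁ + W x₁ / k - x₁ = W x₁ / k := by ring
    rw [h7] at hslope
    have h8 : 0 < W x₁ / k := div_pos (hWpos x₁) hkpos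
    have h9 : deriv W ξ * (W x₁ / k) < -k * (W x₁ / k) := by
      exact mul_lt_mul_of_pos_right h5 h8
    have h10 := hWpos (x₁ + W x₁ / k)
    nlinarith
  have hSclosed : IsClosed S := by
    have : S = Ici x₁ ∩ {x | ψ x ≤ 0} := by
      ext x; simp [hSdef, mem_Ici]
    rw [this]
    exact isClosed_Ici.inter (isClosed_le hψcont continuous_const)
  have hbdd : BddBelow S := ⟨x₁, fun y hy => hy.1⟩
  set x₂ := sInf S with hx₂def
  have hx₂S : x₂ ∈ S := hSclosed.csInf_mem hSne hbdd
  have hψx₁ : 0 < ψ x₁ := by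
    have : ψ x₁ = (deriv W x₁) ^ 2 - 4 * c * W x₁ := rfl
    rw [this]; linarith
  have hx₁x₂ : x₁ < x₂ := by
    rcases lt_or_eq_of_le hx₂S.1 with h | h
    · exact h
    · exfalso; rw [← h] at hx₂S; linarith [hx₂S.2]
  have hpsi_pos : ∀ x ∈ Ico x₁ x₂, 0 < ψ x := by
    intro x hx
    by_contra h
    push_neg at h
    exact (notMem_of_lt_csInf hx.2 hbdd) ⟨hx.1, h⟩
  have hψx₂0 : ψ x₂ = 0 := by
    refine le_antisymm hx₂S.2 ?_
    have htd : Filter.Tendsto ψ (nhdsWithin x₂ (Iio x₂)) (nhds (ψ x₂)) :=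
      (hψcont.continuousAt).continuousWithinAt
    refine ge_of_tendsto htd ?_
    filter_upwards [Ioo_mem_nhdsLT hx₁x₂] with x hx
    exact (hpsi_pos x ⟨hx.1.le, hx.2⟩).le
  have hW'negOn : ∀ x ∈ Icc x₁ x₂, deriv W x < 0 := by
    intro y hy
    by_contra h
    push_neg at h
    obtain ⟨y', hy', h0⟩ := intermediate_value_Icc hy.1 (hWd1.continuous.continuousOn)
      (show (0:ℝ) ∈ Icc (deriv W x₁) (deriv W y) from ⟨hW'neg.le, h⟩)
    have hψy' : ψ y' = -(4 * c * W y') := by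
      have : ψ y' = (deriv W y') ^ 2 - 4 * c * W y' := rfl
      rw [this, h0]; ring
    have hy'2 : y' ≤ x₂ := le_trans hy'.2 hy.2
    rcases lt_or_eq_of_le hy'2 with hlt | heq
    · have := hpsi_pos y' ⟨hy'.1, hlt⟩
      nlinarith [hWpos y']
    · rw [heq] at hψy'
      rw [hψx₂0] at hψy'
      nlinarith [hWpos x₂]
  have hW'x₂ : deriv W x₂ < 0 := hW'negOn x₂ ⟨hx₁x₂.le, le_refl _⟩
  set z := x₂ - deriv W x₂ / (2 * c) with hzdef
  have hdq : deriv W x₂ / (2 * c) < 0 := div_neg_of_neg_of_pos hW'x₂ (by linarith)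
  have hzx₂ : z = x₂ - deriv W x₂ / (2 * c) := hzdef
  have hzgt : x₂ < z := by rw [hzx₂]; linarith
  have h4c : (deriv W x₂) ^ 2 = 4 * c * W x₂ := by
    have : ψ x₂ = (deriv W x₂) ^ 2 - 4 * c * W x₂ := rfl
    rw [this] at hψx₂0; linarith
  have hWx₂ : c * (x₂ - z) ^ 2 = W x₂ := by
    have hxz : x₂ - z = deriv W x₂ / (2 * c) := by rw [hzdef]; ring
    rw [hxz, div_pow, h4c]
    field_simp
    ring
  set F := fun x => Real.sqrt (W x) - Real.sqrt c * (z - x) with hF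
  have hFx₂ : F x₂ = 0 := by
    have h1 : W x₂ = c * (z - x₂) ^ 2 := by rw [← hWx₂]; ring
    have : F x₂ = Real.sqrt (W x₂) - Real.sqrt c * (z - x₂) := rfl
    rw [this, h1, Real.sqrt_mul hc.le, Real.sqrt_sq (by linarith : (0:ℝ) ≤ z - x₂)]
    ring
  have hFanti : StrictAntiOn F (Icc x₁ x₂) := by
    refine strictAntiOn_of_deriv_neg (convex_Icc _ _) ?_ ?_
    · exact ((hWd.continuous.sqrt).sub
        (continuous_const.mul (continuous_const.sub continuous_id))).continuousOn
    · intro x hx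
      rw [interior_Icc] at hx
      have hx' : x ∈ Icc x₁ x₂ := Ioo_subset_Icc_self hx
      have hW' := hW'negOn x hx'
      have hψx := hpsi_pos x ⟨hx'.1, hx.2⟩
      have hWxpos := hWpos x
      have hsq : 0 < Real.sqrt (W x) := Real.sqrt_pos.2 hWxpos
      have hder : HasDerivAt F (deriv W x / (2 * Real.sqrt (W x)) + Real.sqrt c) x := by
        have h1 : HasDerivAt (fun y => Real.sqrt (W y)) (deriv W x / (2 * Real.sqrt (W x))) x :=
          ((hWd x).hasDerivAt).sqrt (ne_of_gt hWxpos)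
        have h2 : HasDerivAt (fun y => Real.sqrt c * (z - y)) (Real.sqrt c * (0 - 1)) x :=
          ((hasDerivAt_const x z).sub (hasDerivAt_id x)).const_mul _
        have := h1.sub h2
        exact this.congr_deriv (by ring)
      rw [hder.deriv]
      have key : 2 * Real.sqrt c * Real.sqrt (W x) < -(deriv W x) := by
        refine lt_of_pow_lt_pow_left₀ 2 (by linarith) ?_
        have e1 : (2 * Real.sqrt c * Real.sqrt (W x)) ^ 2 = 4 * c * W x := by
          rw [mul_pow, mul_pow, Real.sq_sqrt hc.le, Real.sq_sqrt hWxpos.le]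
          ring
        have e2 : (-(deriv W x)) ^ 2 = (deriv W x) ^ 2 := by ring
        rw [e1, e2]
        have : ψ x = (deriv W x) ^ 2 - 4 * c * W x := rfl
        rw [this] at hψx
        linarith
      have h2W : 0 < 2 * Real.sqrt (W x) := by linarith
      have hlt : deriv W x / (2 * Real.sqrt (W x)) < -Real.sqrt c := by
        rw [div_lt_iff₀ h2W]
        nlinarith
      linarith
  have hFx₁ : 0 < F x₁ := by
    have := hFanti ⟨le_refl _, hx₁x₂.le⟩ ⟨hx₁x₂.le, le_refl _⟩ hx₁x₂
    rw [hFx₂] at this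
    exact this
  have hWx₁ : c * (x₁ - z) ^ 2 < W x₁ := by
    have h1 : Real.sqrt c * (z - x₁) < Real.sqrt (W x₁) := by
      have : F x₁ = Real.sqrt (W x₁) - Real.sqrt c * (z - x₁) := rfl
      rw [this] at hFx₁
      linarith
    have h0 : 0 ≤ Real.sqrt c * (z - x₁) :=
      mul_nonneg (Real.sqrt_nonneg _) (by linarith)
    have h2 := pow_lt_pow_left₀ h1 h0 (two_ne_zero)
    rw [mul_pow, Real.sq_sqrt hc.le, Real.sq_sqrt (hWpos x₁).le] at h2
    calc c * (x₁ - z) ^ 2 = c * (z - x₁) ^ 2 := by ring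
    _ < W x₁ := h2
  -- conclusion
  clear_value ψ S x₂ z F
  have hg1 : 0 < W x₁ - c * (x₁ - z) ^ 2 := by linarith
  refine ⟨z, min (W x₁ - c * (x₁ - z) ^ 2) P₀ / 2, x₁, x₂, z, ?_, hx₁x₂, hzgt, ?_, ?_, ?_⟩
  · exact div_pos (lt_min hg1 hP₀) two_pos
  · have h5 := min_le_left (W x₁ - c * (x₁ - z) ^ 2) P₀
    have h6 : 0 < min (W x₁ - c * (x₁ - z) ^ 2) P₀ := lt_min hg1 hP₀
    linarith
  · have h1 := div_pos (lt_min hg1 hP₀) two_pos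
    rw [hWx₂] at *
    linarith [hWx₂]
  · have := min_le_right (W x₁ - c * (x₁ - z) ^ 2) P₀
    have h2 := hWP z
    have h3 : c * (z - z) ^ 2 = 0 := by ring
    linarith

private lemma parabola_of_bad (c P₀ : ℝ) (hc : 0 < c) (hP₀ : 0 < P₀) (W : ℝ → ℝ)
    (hW : ContDiff ℝ 2 W) (hWP : ∀ x, P₀ ≤ W x) (x₁ : ℝ)
    (h2 : 2 * c < deriv (deriv W) x₁) :
    ∃ z g a b e : ℝ, 0 < g ∧ a < b ∧ b < e ∧
      c * (a - z) ^ 2 + g < W a ∧ W b < c * (b - z) ^ 2 + g ∧ c * (e - z) ^ 2 + g < W e := by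
  rcases le_or_gt ((deriv W x₁) ^ 2) (4 * c * W x₁) with hψ | hψ
  · exact lemA c hc W hW x₁ h2 hψ
  · have hWpos : 0 < W x₁ := lt_of_lt_of_le hP₀ (hWP x₁)
    rcases lt_trichotomy (deriv W x₁) 0 with hneg | h0 | hpos
    · exact lemB c P₀ hc hP₀ W hW hWP x₁ hψ hneg
    · exfalso; rw [h0] at hψ; nlinarith
    · -- mirror case
      set V := fun x => W (-x) with hV
      have hVC2 : ContDiff ℝ 2 V := hW.comp contDiff_neg
      have hVd : ∀ x, deriv V x = -deriv W (-x) := fun x => by rw [hV]; exact deriv_comp_neg W x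
      have hVP : ∀ x, P₀ ≤ V x := fun x => hWP (-x)
      have hψV : 4 * c * V (-x₁) < (deriv V (-x₁)) ^ 2 := by
        rw [hVd, neg_neg]
        have : V (-x₁) = W x₁ := by rw [hV]; simp
        rw [this]
        nlinarith
      have hVneg : deriv V (-x₁) < 0 := by rw [hVd, neg_neg]; linarith
      obtain ⟨z, g, a, b, e, hg, hab, hbe, ha, hb, he⟩ :=
        lemB c P₀ hc hP₀ V hVC2 hVP (-x₁) hψV hVneg
      simp only [hV] at ha hb he
      refine ⟨-z, g, -e, -b, -a, hg, by linarith, by linarith, ?_, ?_, ?_⟩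
      · have h' : c * ((-e : ℝ) - (-z)) ^ 2 = c * (e - z) ^ 2 := by ring
        rw [h']
        exact he
      · have h' : c * ((-b : ℝ) - (-z)) ^ 2 = c * (b - z) ^ 2 := by ring
        rw [h']
        exact hb
      · have h' : c * ((-a : ℝ) - (-z)) ^ 2 = c * (a - z) ^ 2 := by ring
        rw [h']
        exact ha

private lemma pres_iff (γ k A v : ℝ) (hγ : γ - 1 < 0) (hk : k < 0) (hA : 0 < A) (hv : 0 < v) :
    (0 < A ^ (1 / (γ - 1)) - v ↔ 0 < k * A - k * v ^ (γ - 1)) ∧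
    (0 ≤ A ^ (1 / (γ - 1)) - v ↔ 0 ≤ k * A - k * v ^ (γ - 1)) := by
  have hr : 0 < A ^ (1 / (γ - 1)) := Real.rpow_pos_of_pos hA _
  have hrA : (A ^ (1 / (γ - 1))) ^ (γ - 1) = A := by
    rw [← Real.rpow_mul hA.le, one_div_mul_cancel (ne_of_lt hγ), Real.rpow_one]
  have h1 := Real.rpow_lt_rpow_iff_of_neg hr hv hγ
  rw [hrA] at h1
  -- h1 : A < v ^ (γ-1) ↔ v < A ^ (1/(γ-1))
  have h2 := Real.rpow_le_rpow_iff_of_neg hr hv hγ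
  rw [hrA] at h2
  -- h2 : A ≤ v ^ (γ-1) ↔ v ≤ A ^ (1/(γ-1))
  constructor
  · rw [sub_pos, sub_pos, mul_lt_mul_left_of_neg hk]
    exact h1.symm
  · rw [sub_nonneg, sub_nonneg, mul_le_mul_left_of_neg hk]
    exact h2.symm

private lemma cm_surj (γ : ℝ) (hγ0 : 0 < γ) (hγ1 : γ < 1)
    (Cm : ℝ → ℝ) (ρ : ℝ → ℝ → ℝ → ℝ)
    (hρ : ∀ m x τ : ℝ, ρ m x τ =
      (max (Cm m * τ ^ ((1 - γ) / (γ + 1)) - (γ - 1) / (2 * γ * (γ + 1)) * x ^ 2 / τ) 0)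
        ^ (1 / (γ - 1)))
    (hC : ∀ m : ℝ, 0 < m → 0 < Cm m ∧ ∀ τ : ℝ, 0 < τ → (∫ x : ℝ, ρ m x τ) = m) :
    ∀ C : ℝ, 0 < C → ∃ m : ℝ, 0 < m ∧ Cm m = C := by
  have hγm1 : γ - 1 < 0 := by linarith
  set Bc := -((γ - 1) / (2 * γ * (γ + 1))) with hBc
  have hBcpos : 0 < Bc := by
    have hd : (0:ℝ) < 2 * γ * (γ + 1) := by positivity
    have : (γ - 1) / (2 * γ * (γ + 1)) < 0 := div_neg_of_neg_of_pos (by linarith) hd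
    rw [hBc]; linarith
  set ee := 1 / (γ - 1) with hee
  have hρ1 : ∀ m : ℝ, 0 < Cm m → ∀ x : ℝ, ρ m x 1 = (Cm m + Bc * x ^ 2) ^ ee := by
    intro m hCm x
    rw [hρ]
    have harg : Cm m * (1:ℝ) ^ ((1 - γ) / (γ + 1)) - (γ - 1) / (2 * γ * (γ + 1)) * x ^ 2 / 1
        = Cm m + Bc * x ^ 2 := by
      rw [Real.one_rpow, hBc]; ring
    rw [harg, max_eq_left (by nlinarith [sq_nonneg x] : (0:ℝ) ≤ Cm m + Bc * x ^ 2)]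
  have hscale : ∀ C : ℝ, 0 < C →
      (∫ x : ℝ, (C + Bc * x ^ 2) ^ ee) = C ^ (ee + 1 / 2) * ∫ x : ℝ, (1 + Bc * x ^ 2) ^ ee := by
    intro C hCp
    have ha : (0:ℝ) < C ^ ((1:ℝ) / 2) := Real.rpow_pos_of_pos hCp _
    have key := MeasureTheory.Measure.integral_comp_mul_left
      (fun x : ℝ => (C + Bc * x ^ 2) ^ ee) (C ^ ((1:ℝ) / 2))
    have hsq : (C ^ ((1:ℝ) / 2)) ^ 2 = C := by
      rw [← Real.rpow_natCast (C ^ ((1:ℝ) / 2)) 2, ← Real.rpow_mul hCp.le]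
      norm_num
    have hlhs : ∀ x : ℝ, (C + Bc * (C ^ ((1:ℝ) / 2) * x) ^ 2) ^ ee
        = C ^ ee * (1 + Bc * x ^ 2) ^ ee := by
      intro x
      rw [mul_pow, hsq, show C + Bc * (C * x ^ 2) = C * (1 + Bc * x ^ 2) by ring]
      exact Real.mul_rpow hCp.le (by nlinarith [sq_nonneg x])
    simp only [hlhs] at key
    rw [MeasureTheory.integral_const_mul] at key
    rw [abs_of_pos (inv_pos.2 ha), smul_eq_mul] at key
    have h2 : (∫ x : ℝ, (C + Bc * x ^ 2) ^ ee)
        = C ^ ((1:ℝ) / 2) * (C ^ ee * ∫ x : ℝ, (1 + Bc * x ^ 2) ^ ee) := by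
      rw [key, ← mul_assoc, mul_inv_cancel₀ (ne_of_gt ha), one_mul]
    rw [h2, ← mul_assoc, ← Real.rpow_add hCp, show (1:ℝ) / 2 + ee = ee + 1 / 2 by ring]
  set I₁ := ∫ x : ℝ, (1 + Bc * x ^ 2) ^ ee with hI₁
  have hmass : ∀ m : ℝ, 0 < m → m = (Cm m) ^ (ee + 1 / 2) * I₁ := by
    intro m hm
    obtain ⟨hCm, hint⟩ := hC m hm
    have h0 := hint 1 one_pos
    have hρ1' := hρ1 m hCm
    simp only [hρ1'] at h0
    rw [hscale (Cm m) hCm] at h0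
    exact h0.symm
  have hee2 : ee + 1 / 2 < 0 := by
    have h1 : 1 / (γ - 1) < -1 := by
      rw [div_lt_iff_of_neg hγm1]
      linarith
    rw [hee]; linarith
  have hI₁pos : 0 < I₁ := by
    have h1 := hmass 1 one_pos
    have hCm1 : 0 < Cm 1 := (hC 1 one_pos).1
    have hp : 0 < (Cm 1) ^ (ee + 1 / 2) := Real.rpow_pos_of_pos hCm1 _
    nlinarith
  intro C hCpos
  have hmpos : 0 < C ^ (ee + 1 / 2) * I₁ := by
    have := Real.rpow_pos_of_pos hCpos (ee + 1 / 2)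
    positivity
  refine ⟨C ^ (ee + 1 / 2) * I₁, hmpos, ?_⟩
  have h2 := hmass _ hmpos
  have h3 : C ^ (ee + 1 / 2) = (Cm (C ^ (ee + 1 / 2) * I₁)) ^ (ee + 1 / 2) :=
    mul_right_cancel₀ (ne_of_gt hI₁pos) h2
  have hC' : 0 < Cm (C ^ (ee + 1 / 2) * I₁) := (hC _ hmpos).1
  rcases lt_trichotomy (Cm (C ^ (ee + 1 / 2) * I₁)) C with h | h | h
  · exfalso
    have := Real.rpow_lt_rpow_of_neg hC' h hee2
    linarith [h3]
  · exact h
  · exfalso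
    have := Real.rpow_lt_rpow_of_neg hCpos h hee2
    linarith [h3]

theorem aronson_benilan_iff_connectable_fde
    (t γ : ℝ) (ht : 0 < t) (hγ0 : 0 < γ) (hγ1 : γ < 1)
    (Cm : ℝ → ℝ)  -- the mass-normalising constant m ↦ C_m
    (ρ : ℝ → ℝ → ℝ → ℝ)  -- Barenblatt solution ρ m x τ
    (hρ : ∀ m x τ : ℝ, ρ m x τ =
      (max (Cm m * τ ^ ((1 - γ) / (γ + 1)) - (γ - 1) / (2 * γ * (γ + 1)) * x ^ 2 / τ) 0)
        ^ (1 / (γ - 1)))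
    (hC : ∀ m : ℝ, 0 < m → 0 < Cm m ∧ ∀ τ : ℝ, 0 < τ → (∫ x : ℝ, ρ m x τ) = m)
    (u : ℝ → ℝ) (hu_pos : ∀ x : ℝ, 0 < u x) (hu_bdd : ∃ M : ℝ, ∀ x : ℝ, u x ≤ M)
    (hu_C2 : ContDiff ℝ 2 u) :
    (∀ x : ℝ,
        -(1 / (t * (γ + 1))) ≤ deriv (deriv (fun y => γ / (γ - 1) * u y ^ (γ - 1))) x) ↔
      (∀ m x₀ : ℝ, 0 < m → Connectable (fun x => ρ m (x - x₀) t - u x)) := by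
  have hγm1 : γ - 1 < 0 := by linarith
  have hγm1' : γ - 1 ≠ 0 := ne_of_lt hγm1
  have hγp1 : (0:ℝ) < γ + 1 := by linarith
  have hγne : γ ≠ 0 := ne_of_gt hγ0
  have hγp1' : γ + 1 ≠ 0 := ne_of_gt hγp1
  have ht' : t ≠ 0 := ne_of_gt ht
  have hk : γ / (γ - 1) < 0 := div_neg_of_pos_of_neg hγ0 hγm1
  set p := fun y => γ / (γ - 1) * u y ^ (γ - 1) with hp
  have hpC2 : ContDiff ℝ 2 p := by
    have h1 : ContDiff ℝ 2 (fun y => u y ^ (γ - 1)) :=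
      hu_C2.rpow_const_of_ne (fun x => (hu_pos x).ne')
    exact contDiff_const.mul h1
  obtain ⟨hpd, hpd1, hpc2⟩ := c2_facts hpC2
  have htp : (0:ℝ) < t ^ ((1 - γ) / (γ + 1)) := Real.rpow_pos_of_pos ht _
  have htp' : t ^ ((1 - γ) / (γ + 1)) ≠ 0 := ne_of_gt htp
  constructor
  · -- (i) → (ii)
    intro hAB m x₀ hm
    obtain ⟨hCmpos, -⟩ := hC m hm
    set A := fun x : ℝ => Cm m * t ^ ((1 - γ) / (γ + 1))
      - (γ - 1) / (2 * γ * (γ + 1)) * (x - x₀) ^ 2 / t with hA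
    have hApos : ∀ x, 0 < A x := by
      intro x
      have h1 : (γ - 1) / (2 * γ * (γ + 1)) < 0 :=
        div_neg_of_neg_of_pos (by linarith) (by positivity)
      have h2 : (γ - 1) / (2 * γ * (γ + 1)) * (x - x₀) ^ 2 / t ≤ 0 :=
        div_nonpos_of_nonpos_of_nonneg (mul_nonpos_of_nonpos_of_nonneg h1.le (sq_nonneg _)) ht.le
      have h3 : 0 < Cm m * t ^ ((1 - γ) / (γ + 1)) := by positivity
      have h4 : A x = Cm m * t ^ ((1 - γ) / (γ + 1))
        - (γ - 1) / (2 * γ * (γ + 1)) * (x - x₀) ^ 2 / t := rfl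
      rw [h4]; linarith
    have hρeq : ∀ x, ρ m (x - x₀) t = A x ^ (1 / (γ - 1)) := by
      intro x
      rw [hρ]
      have h5 : max (Cm m * t ^ ((1 - γ) / (γ + 1))
          - (γ - 1) / (2 * γ * (γ + 1)) * (x - x₀) ^ 2 / t) 0 = A x :=
        max_eq_left (hApos x).le
      rw [h5]
    set k := γ / (γ - 1) with hkdef
    set c₂ := γ / (γ - 1) * ((γ - 1) / (2 * γ * (γ + 1))) / t with hc₂
    set q := fun x : ℝ => k * (Cm m * t ^ ((1 - γ) / (γ + 1))) - c₂ * (x - x₀) ^ 2 with hq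
    have hqA : ∀ x, q x = k * A x := by
      intro x
      have h4 : A x = Cm m * t ^ ((1 - γ) / (γ + 1))
        - (γ - 1) / (2 * γ * (γ + 1)) * (x - x₀) ^ 2 / t := rfl
      have h5 : q x = k * (Cm m * t ^ ((1 - γ) / (γ + 1))) - c₂ * (x - x₀) ^ 2 := rfl
      rw [h4, h5, hc₂, hkdef]
      ring
    have h2c₂ : 2 * c₂ = 1 / (t * (γ + 1)) := by
      rw [hc₂]
      field_simp
    have hq' : ∀ x, HasDerivAt q (-(2 * c₂ * (x - x₀))) x := by
      intro x
      have h1 : HasDerivAt (fun x : ℝ => (x - x₀) ^ 2) (2 * (x - x₀)) x := by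
        simpa using ((hasDerivAt_id x).sub_const x₀).fun_pow 2
      have h6 := (h1.const_mul c₂).const_sub (k * (Cm m * t ^ ((1 - γ) / (γ + 1))))
      exact h6.congr_deriv (by ring)
    have hqd : Differentiable ℝ q := fun x => (hq' x).differentiableAt
    have hderivq : deriv q = fun x => -(2 * c₂ * (x - x₀)) := funext fun x => (hq' x).deriv
    have hq'' : ∀ x, HasDerivAt (deriv q) (-(2 * c₂)) x := by
      rw [hderivq]
      intro x
      have h1 : HasDerivAt (fun x : ℝ => 2 * c₂ * (x - x₀)) (2 * c₂) x := by
        simpa using ((hasDerivAt_id x).sub_const x₀).const_mul (2 * c₂)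
      exact h1.fun_neg
    set f := fun x => p x - q x with hf
    have hfd : Differentiable ℝ f := hpd.sub hqd
    have hderivf : deriv f = fun x => deriv p x - deriv q x :=
      funext fun x => deriv_sub (hpd x) (hqd x)
    have hfd1 : Differentiable ℝ (deriv f) := by
      rw [hderivf]
      exact hpd1.sub fun x => (hq'' x).differentiableAt
    have hf2 : ∀ x, deriv (deriv f) x = deriv (deriv p) x + 2 * c₂ := by
      intro x
      rw [hderivf, deriv_fun_sub (hpd1 x) ((hq'' x).differentiableAt), (hq'' x).deriv]
      ring
    have hconv : ConvexOn ℝ Set.univ f := by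
      refine convexOn_univ_of_deriv2_nonneg hfd hfd1 ?_
      intro x
      have hit : deriv^[2] f = deriv (deriv f) := by
        rw [Function.iterate_succ, Function.iterate_one]
        rfl
      rw [hit, hf2, h2c₂]
      have := hAB x
      linarith
    have hBconv : Convex ℝ {x : ℝ | f x < 0} := by
      have h7 := hconv.convex_lt 0
      rwa [Set.sep_univ] at h7
    have hiff : ∀ x, (0 < ρ m (x - x₀) t - u x ↔ f x < 0) := by
      intro x
      rw [hρeq x]
      rw [(pres_iff γ k (A x) (u x) hγm1 hk (hApos x) (hu_pos x)).1]
      have h2 : f x = k * u x ^ (γ - 1) - k * A x := by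
        have h8 : f x = p x - q x := rfl
        have h9 : p x = k * u x ^ (γ - 1) := rfl
        rw [h8, h9, hqA x]
      rw [h2]
      constructor <;> intro h <;> linarith
    refine ⟨{x : ℝ | 0 < ρ m (x - x₀) t - u x}, ?_, fun x hx => hx, fun x hx => le_of_lt (show (0:ℝ) < ρ m (x - x₀) t - u x from hx)⟩
    have hseteq : {x : ℝ | 0 < ρ m (x - x₀) t - u x} = {x : ℝ | f x < 0} :=
      Set.ext fun x => hiff x
    rw [hseteq]
    exact hBconv.isPreconnected
  · -- (ii) → (i)
    intro hConn
    by_contra hcon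
    push_neg at hcon
    obtain ⟨x₁, hx₁⟩ := hcon
    set c := 1 / (2 * (t * (γ + 1))) with hcdef
    have hc : 0 < c := by rw [hcdef]; positivity
    have h2c : 2 * c = 1 / (t * (γ + 1)) := by
      rw [hcdef]; field_simp
    set W := fun x => -(p x) with hW
    have hWC2 : ContDiff ℝ 2 W := hpC2.neg
    have hderivW : deriv W = fun x => -(deriv p x) := funext fun x => deriv.neg
    have hW2 : deriv (deriv W) x₁ = -(deriv (deriv p) x₁) := by
      rw [hderivW]; exact deriv.neg
    have hbad : 2 * c < deriv (deriv W) x₁ := by rw [hW2, h2c]; linarith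
    obtain ⟨M, hM⟩ := hu_bdd
    have hMpos : 0 < M := lt_of_lt_of_le (hu_pos 0) (hM 0)
    set P₀ := γ / (1 - γ) * M ^ (γ - 1) with hP₀def
    have h1γ : (0:ℝ) < 1 - γ := by linarith
    have hP₀ : 0 < P₀ := by
      have h1 := Real.rpow_pos_of_pos hMpos (γ - 1)
      have h2 : 0 < γ / (1 - γ) := div_pos hγ0 h1γ
      rw [hP₀def]; positivity
    have hneg : γ / (1 - γ) = -(γ / (γ - 1)) := by
      rw [show (1:ℝ) - γ = -(γ - 1) by ring, div_neg]
    have hWP : ∀ x, P₀ ≤ W x := by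
      intro x
      have h1 : M ^ (γ - 1) ≤ u x ^ (γ - 1) :=
        Real.rpow_le_rpow_of_nonpos (hu_pos x) (hM x) hγm1.le
      have h2 : γ / (1 - γ) * M ^ (γ - 1) ≤ γ / (1 - γ) * u x ^ (γ - 1) :=
        mul_le_mul_of_nonneg_left h1 (le_of_lt (div_pos hγ0 h1γ))
      have h3 : W x = γ / (1 - γ) * u x ^ (γ - 1) := by
        have h4 : W x = -(γ / (γ - 1) * u x ^ (γ - 1)) := rfl
        rw [h4, hneg]
        ring
      rw [h3, hP₀def]
      exact h2
    obtain ⟨z, g, a₁, b₁, e₁, hg, hab, hbe, hA1, hB1', hE1⟩ :=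
      parabola_of_bad c P₀ hc hP₀ W hWC2 hWP x₁ hbad
    set Cstar := g * ((1 - γ) / γ) / t ^ ((1 - γ) / (γ + 1)) with hCstar
    have hCstarpos : 0 < Cstar := by
      have h1 : 0 < (1 - γ) / γ := div_pos h1γ hγ0
      rw [hCstar]; positivity
    obtain ⟨m', hm', hCmeq⟩ := cm_surj γ hγ0 hγ1 Cm ρ hρ hC Cstar hCstarpos
    have hCm'pos : 0 < Cm m' := (hC m' hm').1
    set A := fun x : ℝ => Cm m' * t ^ ((1 - γ) / (γ + 1))
      - (γ - 1) / (2 * γ * (γ + 1)) * (x - z) ^ 2 / t with hA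
    have hApos : ∀ x, 0 < A x := by
      intro x
      have h1 : (γ - 1) / (2 * γ * (γ + 1)) < 0 :=
        div_neg_of_neg_of_pos (by linarith) (by positivity)
      have h2 : (γ - 1) / (2 * γ * (γ + 1)) * (x - z) ^ 2 / t ≤ 0 :=
        div_nonpos_of_nonpos_of_nonneg (mul_nonpos_of_nonpos_of_nonneg h1.le (sq_nonneg _)) ht.le
      have h3 : 0 < Cm m' * t ^ ((1 - γ) / (γ + 1)) := by positivity
      have h4 : A x = Cm m' * t ^ ((1 - γ) / (γ + 1))
        - (γ - 1) / (2 * γ * (γ + 1)) * (x - z) ^ 2 / t := rfl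
      rw [h4]; linarith
    have hρeq : ∀ x, ρ m' (x - z) t = A x ^ (1 / (γ - 1)) := by
      intro x
      rw [hρ]
      have h5 : max (Cm m' * t ^ ((1 - γ) / (γ + 1))
          - (γ - 1) / (2 * γ * (γ + 1)) * (x - z) ^ 2 / t) 0 = A x :=
        max_eq_left (hApos x).le
      rw [h5]
    set k := γ / (γ - 1) with hkdef
    have hwW : ∀ x, k * A x - k * u x ^ (γ - 1) = W x - (c * (x - z) ^ 2 + g) := by
      intro x
      have h4 : A x = Cm m' * t ^ ((1 - γ) / (γ + 1))
        - (γ - 1) / (2 * γ * (γ + 1)) * (x - z) ^ 2 / t := rfl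
      have h5 : W x = -(k * u x ^ (γ - 1)) := rfl
      rw [h4, h5, hCmeq, hCstar, hkdef, hcdef]
      field_simp
      ring
    obtain ⟨B, hBpre, hBsub1, hBsub2⟩ := hConn m' z hm'
    have hiff1 : ∀ x, 0 < ρ m' (x - z) t - u x ↔ 0 < W x - (c * (x - z) ^ 2 + g) := by
      intro x
      rw [hρeq x, (pres_iff γ k (A x) (u x) hγm1 hk (hApos x) (hu_pos x)).1, hwW x]
    have hiff2 : ∀ x, 0 ≤ ρ m' (x - z) t - u x ↔ 0 ≤ W x - (c * (x - z) ^ 2 + g) := by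
      intro x
      rw [hρeq x, (pres_iff γ k (A x) (u x) hγm1 hk (hApos x) (hu_pos x)).2, hwW x]
    have ha₁B : a₁ ∈ B := hBsub1 ((hiff1 a₁).2 (by linarith))
    have he₁B : e₁ ∈ B := hBsub1 ((hiff1 e₁).2 (by linarith))
    have hb₁B : b₁ ∈ B := (hBpre.ordConnected.out ha₁B he₁B) ⟨hab.le, hbe.le⟩
    have h0 := (hiff2 b₁).1 (hBsub2 hb₁B)
    linarith
end

section
/- Let n ≥ 1, let u⁰ : ℝⁿ → ℝ be a nonnegative, bounded, measurable function, and define u(x,t) = ∫_{ℝⁿ} u⁰(y) φ(x − y, t) dy and ρ_m(x,t) = m φ(x,t) for m > 0. Then for every m > 0, t > 0 and x₀ ∈ ℝⁿ, the set A(t;m,x₀) = {x ∈ ℝⁿ : ρ_m(x − x₀, t) − u(x,t) ≥ 0} is a convex subset of ℝⁿ (possibly empty). -/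
open MeasureTheory Real

theorem heat_superlevel_set_convex
    (n : ℕ) (hn : 1 ≤ n)
    (u0 : EuclideanSpace ℝ (Fin n) → ℝ)
    (hu0_meas : Measurable u0) (hu0_nn : ∀ y, 0 ≤ u0 y)
    (hu0_bdd : ∃ M : ℝ, ∀ y, u0 y ≤ M)
    -- the Gauss heat kernel φ(x,t) = (4πt)^(-n/2) exp(-|x|²/(4t))
    (φ : EuclideanSpace ℝ (Fin n) → ℝ → ℝ)
    (hφ : ∀ x τ, φ x τ = (4 * π * τ) ^ (-(n : ℝ) / 2) * Real.exp (-‖x‖ ^ 2 / (4 * τ)))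
    -- the solution with initial value u0 and the fundamental solution of mass m
    (u : EuclideanSpace ℝ (Fin n) → ℝ → ℝ)
    (hu : ∀ x τ, u x τ = ∫ y, u0 y * φ (x - y) τ)
    (ρ : ℝ → EuclideanSpace ℝ (Fin n) → ℝ → ℝ)
    (hρ : ∀ m x τ, ρ m x τ = m * φ x τ) :
    ∀ (m t : ℝ) (x₀ : EuclideanSpace ℝ (Fin n)), 0 < m → 0 < t →
      Convex ℝ {x : EuclideanSpace ℝ (Fin n) | 0 ≤ ρ m (x - x₀) t - u x t} := by
  obtain ⟨M, hM⟩ := hu0_bdd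
  intro m t x₀ hm ht
  have ht4 : (0 : ℝ) < 4 * t := by linarith
  set C : ℝ := (4 * π * t) ^ (-(n : ℝ) / 2) with hC
  have hCpos : 0 < C := by
    apply Real.rpow_pos_of_pos
    have := Real.pi_pos
    positivity
  -- the affine-in-x exponent
  set q : EuclideanSpace ℝ (Fin n) → EuclideanSpace ℝ (Fin n) → ℝ :=
    fun y x => (2 * (inner ℝ x (y - x₀) : ℝ) + ‖x₀‖ ^ 2 - ‖y‖ ^ 2) / (4 * t) with hq
  set h : EuclideanSpace ℝ (Fin n) → EuclideanSpace ℝ (Fin n) → ℝ :=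
    fun x y => u0 y * C * Real.exp (q y x) with hh
  -- key pointwise identity
  have key : ∀ x y, u0 y * φ (x - y) t * Real.exp (‖x - x₀‖ ^ 2 / (4 * t)) = h x y := by
    intro x y
    rw [hφ]
    have h1 : ‖x - x₀‖ ^ 2 - ‖x - y‖ ^ 2
        = 2 * (inner ℝ x (y - x₀) : ℝ) + ‖x₀‖ ^ 2 - ‖y‖ ^ 2 := by
      rw [norm_sub_sq_real, norm_sub_sq_real, inner_sub_right]
      ring
    have h2 : -‖x - y‖ ^ 2 / (4 * t) + ‖x - x₀‖ ^ 2 / (4 * t) = q y x := by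
      simp only [hq]
      rw [← h1]
      ring
    simp only [hh]
    rw [← h2, Real.exp_add, ← hC]
    ring
  -- integrability of h x
  have hgauss : Integrable (fun v : EuclideanSpace ℝ (Fin n) =>
      Real.exp (-(1 / (4 * t)) * ‖v‖ ^ 2)) := by
    have hb : (0 : ℝ) < 1 / (4 * t) := by positivity
    have hint := GaussianFourier.integrable_cexp_neg_mul_sq_norm_add
      (V := EuclideanSpace ℝ (Fin n)) (b := ((1 / (4 * t) : ℝ) : ℂ)) (by simpa using hb)
      0 (0 : EuclideanSpace ℝ (Fin n))
    have := hint.norm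
    refine this.congr ?_
    filter_upwards with v
    simp [Complex.norm_exp]
    norm_cast
    exact Or.inl rfl
  have hint : ∀ x, Integrable (h x) := by
    intro x
    have hga : Integrable (fun y : EuclideanSpace ℝ (Fin n) =>
        Real.exp (-(1 / (4 * t)) * ‖y - x‖ ^ 2)) := hgauss.comp_sub_right x
    have hmeas : AEStronglyMeasurable (h x) volume := by
      apply AEStronglyMeasurable.mul
      · exact (hu0_meas.mul_const C).aestronglyMeasurable
      · apply Continuous.aestronglyMeasurable
        apply Real.continuous_exp.comp
        simp only [hq]
        apply Continuous.div_const
        exact ((continuous_const.mul (continuous_const.inner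
          (continuous_id.sub continuous_const))).add continuous_const).sub
          (continuous_norm.pow 2)
    refine Integrable.mono' (((hga.const_mul (M * C)).const_mul
      (Real.exp (‖x - x₀‖ ^ 2 / (4 * t))))) hmeas ?_
    filter_upwards with y
    have hnn : 0 ≤ h x y := by
      exact mul_nonneg (mul_nonneg (hu0_nn y) hCpos.le) (Real.exp_pos _).le
    rw [Real.norm_of_nonneg hnn, ← key x y]
    have hφval : φ (x - y) t = C * Real.exp (-(1 / (4 * t)) * ‖y - x‖ ^ 2) := by
      rw [hφ, ← hC, norm_sub_rev]
      congr 1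
      congr 1
      field_simp
    rw [hφval]
    have hexp : (0 : ℝ) < Real.exp (-(1 / (4 * t)) * ‖y - x‖ ^ 2) := Real.exp_pos _
    have hu0M : u0 y ≤ M := hM y
    have := Real.exp_pos (‖x - x₀‖ ^ 2 / (4 * t))
    nlinarith [hu0_nn y, mul_le_mul_of_nonneg_right hu0M (le_of_lt (mul_pos hCpos hexp))]
  -- F x = u x t * exp(‖x-x₀‖²/(4t)) as an integral of h
  set F : EuclideanSpace ℝ (Fin n) → ℝ := fun x => ∫ y, h x y with hF
  have hFu : ∀ x, F x = u x t * Real.exp (‖x - x₀‖ ^ 2 / (4 * t)) := by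
    intro x
    rw [hu, ← integral_mul_const]
    exact integral_congr_ae (Filter.Eventually.of_forall (fun y => (key x y).symm))
  -- membership characterization
  have hmem : ∀ x, (0 ≤ ρ m (x - x₀) t - u x t) ↔ F x ≤ m * C := by
    intro x
    rw [sub_nonneg, hρ, hφ, ← hC, hFu x]
    have hE : (0 : ℝ) < Real.exp (‖x - x₀‖ ^ 2 / (4 * t)) := Real.exp_pos _
    rw [neg_div, Real.exp_neg]
    rw [show m * (C * (Real.exp (‖x - x₀‖ ^ 2 / (4 * t)))⁻¹)
        = m * C / Real.exp (‖x - x₀‖ ^ 2 / (4 * t)) by ring]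
    rw [le_div_iff₀ hE]
  -- affinity of q in x
  intro x hx z hz a b ha hb hab
  simp only [Set.mem_setOf_eq] at hx hz ⊢
  rw [hmem] at hx hz ⊢
  have hqaff : ∀ y, q y (a • x + b • z) = a * q y x + b * q y z := by
    intro y
    simp only [hq, inner_add_left, real_inner_smul_left]
    rw [show a = 1 - b by linarith]
    field_simp
    ring
  have hpt : ∀ y, h (a • x + b • z) y ≤ a * h x y + b * h z y := by
    intro y
    have hcx : Real.exp (a * q y x + b * q y z)
        ≤ a * Real.exp (q y x) + b * Real.exp (q y z) := by
      have := convexOn_exp.2 (Set.mem_univ (q y x)) (Set.mem_univ (q y z)) ha hb hab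
      simpa [smul_eq_mul] using this
    have h0 : 0 ≤ u0 y * C := mul_nonneg (hu0_nn y) hCpos.le
    calc h (a • x + b • z) y = u0 y * C * Real.exp (a * q y x + b * q y z) := by
          simp only [hh, hqaff y]
      _ ≤ u0 y * C * (a * Real.exp (q y x) + b * Real.exp (q y z)) :=
          mul_le_mul_of_nonneg_left hcx h0
      _ = a * h x y + b * h z y := by simp only [hh]; ring
  calc F (a • x + b • z) = ∫ y, h (a • x + b • z) y := rfl
    _ ≤ ∫ y, (a * h x y + b * h z y) := by
        refine integral_mono (hint _) (((hint x).const_mul a).add ((hint z).const_mul b)) ?_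
        exact hpt
    _ = a * F x + b * F z := by
        rw [integral_add ((hint x).const_mul a) ((hint z).const_mul b),
          integral_const_mul, integral_const_mul]
    _ ≤ a * (m * C) + b * (m * C) :=
        add_le_add (mul_le_mul_of_nonneg_left hx ha) (mul_le_mul_of_nonneg_left hz hb)
    _ = m * C := by rw [← add_mul, hab, one_mul]
end

section
/- Let t > 0, a < b, and let u : ℝ → ℝ be nonnegative with u(x) = 0 for all x ∉ [a,b], and suppose u satisfies the one-sided Oleinik inequality u(x) − u(y) ≤ (x − y)/t for all y < x. Then the total variation of u over ℝ is at most 2(b − a)/t. -/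
theorem tv_bound_of_oleinik (t a b : ℝ) (ht : 0 < t) (hab : a < b)
    (u : ℝ → ℝ) (hu_nn : ∀ x : ℝ, 0 ≤ u x)
    (hu_supp : ∀ x : ℝ, x ∉ Set.Icc a b → u x = 0)
    (h_oleinik : ∀ x y : ℝ, y < x → u x - u y ≤ (x - y) / t) :
    ∀ (N : ℕ) (p : ℕ → ℝ), (∀ i : ℕ, i < N → p i < p (i + 1)) →
      ∑ i ∈ Finset.range N, |u (p (i + 1)) - u (p i)| ≤ 2 * (b - a) / t := by
  intro N p hp
  set q : ℝ → ℝ := fun x => max a (min x b) with hq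
  have hqmono : Monotone q := fun x y hxy =>
    max_le_max le_rfl (min_le_min hxy le_rfl)
  have hqa : ∀ x, a ≤ q x := fun x => le_max_left _ _
  have hqb : ∀ x, q x ≤ b := fun x => max_le hab.le (min_le_right _ _)
  have hA : ∀ x, u x ≤ (q x - a) / t := by
    intro x
    rcases lt_or_ge x a with hx | hx
    · rw [hu_supp x (by simp [Set.mem_Icc]; intro h; linarith)]
      exact div_nonneg (by linarith [hqa x]) ht.le
    · rcases le_or_gt x b with hxb | hxb
      · have hqx : q x = x := by
          simp only [hq]
          rw [min_eq_left hxb, max_eq_right hx]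
        rw [hqx]
        apply le_of_forall_pos_le_add
        intro ε hε
        have hy : a - ε * t < x := by nlinarith
        have h1 := h_oleinik x (a - ε * t) hy
        have h0 : u (a - ε * t) = 0 :=
          hu_supp _ (by simp [Set.mem_Icc]; intro h; nlinarith)
        rw [h0, sub_zero] at h1
        calc u x ≤ (x - (a - ε * t)) / t := h1
          _ = (x - a) / t + ε := by field_simp; ring
      · rw [hu_supp x (by simp [Set.mem_Icc]; intro h; linarith)]
        exact div_nonneg (by linarith [hqa x]) ht.le
  have hB : ∀ x y : ℝ, y < x → max (u x - u y) 0 ≤ (q x - q y) / t := by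
    intro x y hyx
    rcases le_or_gt (u x - u y) 0 with hd | hd
    · rw [max_eq_right hd]
      exact div_nonneg (sub_nonneg.2 (hqmono hyx.le)) ht.le
    · rw [max_eq_left hd.le]
      have hxab : x ∈ Set.Icc a b := by
        by_contra hc
        have h0 := hu_supp x hc
        have h1 := hu_nn y
        linarith
      have hqx : q x = x := by
        simp only [hq]
        rw [min_eq_left hxab.2, max_eq_right hxab.1]
      rcases le_or_gt a y with hay | hay
      · have hqy : q y = y := by
          simp only [hq]
          rw [min_eq_left (le_trans hyx.le hxab.2), max_eq_right hay]
        rw [hqx, hqy]; exact h_oleinik x y hyx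
      · have hqy : q y = a := by
          simp only [hq]
          rw [min_eq_left (by linarith [hxab.2] : y ≤ b), max_eq_left hay.le]
        have h0 : u y = 0 := hu_supp y (by simp [Set.mem_Icc]; intro h; linarith)
        have h2 := hA x
        rw [hqx] at h2
        rw [hqx, hqy, h0]
        linarith
  calc ∑ i ∈ Finset.range N, |u (p (i + 1)) - u (p i)|
      = ∑ i ∈ Finset.range N,
          (2 * max (u (p (i + 1)) - u (p i)) 0 - (u (p (i + 1)) - u (p i))) := by
        apply Finset.sum_congr rfl
        intro i _
        rcases le_total (u (p (i + 1)) - u (p i)) 0 with h | h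
        · rw [abs_of_nonpos h, max_eq_right h]; ring
        · rw [abs_of_nonneg h, max_eq_left h]; ring
    _ = 2 * ∑ i ∈ Finset.range N, max (u (p (i + 1)) - u (p i)) 0
          - (u (p N) - u (p 0)) := by
        have tele : ∑ i ∈ Finset.range N, (u (p (i + 1)) - u (p i)) = u (p N) - u (p 0) :=
          Finset.sum_range_sub (fun i => u (p i)) N
        rw [Finset.sum_sub_distrib, Finset.mul_sum, tele]
    _ ≤ 2 * ((q (p N) - q (p 0)) / t) - (u (p N) - u (p 0)) := by
        have hs : ∑ i ∈ Finset.range N, max (u (p (i + 1)) - u (p i)) 0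
            ≤ (q (p N) - q (p 0)) / t := by
          calc ∑ i ∈ Finset.range N, max (u (p (i + 1)) - u (p i)) 0
              ≤ ∑ i ∈ Finset.range N, (q (p (i + 1)) - q (p i)) / t :=
                Finset.sum_le_sum (fun i hi => hB _ _ (hp i (Finset.mem_range.1 hi)))
            _ = (q (p N) - q (p 0)) / t := by
                rw [← Finset.sum_div, Finset.sum_range_sub (fun i => q (p i)) N]
        linarith
    _ ≤ 2 * (b - a) / t := by
        have h1 := hA (p 0)
        have h2 := hu_nn (p N)
        have h3 := hqb (p N)
        have h4 := hqa (p 0)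
        have e1 : 2 * ((q (p N) - q (p 0)) / t) + (q (p 0) - a) / t
            = (2 * (q (p N) - q (p 0)) + (q (p 0) - a)) / t := by ring
        have e2 : (2 * (q (p N) - q (p 0)) + (q (p 0) - a)) / t ≤ 2 * (b - a) / t := by
          gcongr
          linarith
        linarith
end

section
/- Let u, ρ : ℝ → ℝ with ρ continuous, and suppose that for every s ∈ ℝ the set {x ∈ ℝ : ρ(x − s) − u(x) > 0} is connectable. Let a ≤ b be such that ρ(x) = u(x) for all x ∈ [a,b], suppose there exists δ > 0 such that ρ is strictly increasing on [a, a + δ], and suppose there exists ε > 0 such that u(x) > ρ(x) for all x ∈ (a − ε, a) and ρ(x) < u(x) for all x ∈ (b, b + ε). Then ρ(x) ≤ u(x) for all x > b. -/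
theorem steepness_case_1a (u ρ : ℝ → ℝ) (hρ_cont : Continuous ρ)
    (hconn : ∀ s : ℝ, Connectable (fun x => ρ (x - s) - u x))
    (a b : ℝ) (hab : a ≤ b)
    (heq : ∀ x ∈ Set.Icc a b, ρ x = u x)
    (hinc : ∃ δ > 0, StrictMonoOn ρ (Set.Icc a (a + δ)))
    (hsides : ∃ ε > 0, (∀ x ∈ Set.Ioo (a - ε) a, ρ x < u x) ∧
      (∀ x ∈ Set.Ioo b (b + ε), ρ x < u x)) :
    ∀ x : ℝ, b < x → ρ x ≤ u x := by
  obtain ⟨δ, hδ, hmono⟩ := hinc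
  obtain ⟨ε, hε, _, hright⟩ := hsides
  intro x₀ hx₀
  by_contra hlt
  push_neg at hlt
  -- x₀ is not in (b, b+ε), so b + ε ≤ x₀
  have hx₀ε : b + ε ≤ x₀ := by
    by_contra h
    push_neg at h
    exact absurd (hright x₀ ⟨hx₀, h⟩) (not_lt.2 hlt.le)
  set w : ℝ := b + ε / 2 with hw
  have hwmem : w ∈ Set.Ioo b (b + ε) := ⟨by simp [hw]; linarith, by simp [hw]; linarith⟩
  have hwlt : ρ w < u w := hright w hwmem
  have hwx₀ : w < x₀ := by
    have : w < b + ε := hwmem.2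
    linarith
  have haw : a ≤ w := le_trans hab hwmem.1.le
  -- find small positive t < δ with ρ (w + t) < u w and u x₀ < ρ (x₀ + t)
  have h1 : ∀ᶠ t in nhds (0 : ℝ), ρ (w + t) < u w := by
    have hc : ContinuousAt (fun t : ℝ => ρ (w + t)) 0 :=
      (hρ_cont.comp (continuous_const.add continuous_id)).continuousAt
    have h0 : (fun t : ℝ => ρ (w + t)) 0 < u w := by simpa using hwlt
    exact hc.eventually_lt continuousAt_const h0
  have h2 : ∀ᶠ t in nhds (0 : ℝ), u x₀ < ρ (x₀ + t) := by
    have hc : ContinuousAt (fun t : ℝ => ρ (x₀ + t)) 0 :=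
      (hρ_cont.comp (continuous_const.add continuous_id)).continuousAt
    have h0 : u x₀ < (fun t : ℝ => ρ (x₀ + t)) 0 := by simpa using hlt
    exact continuousAt_const.eventually_lt hc h0
  have h3 : ∀ᶠ t in nhds (0 : ℝ), t < δ := eventually_lt_nhds hδ
  have h4 : ∀ᶠ t in nhdsWithin (0 : ℝ) (Set.Ioi 0), (0 : ℝ) < t :=
    eventually_mem_nhdsWithin
  obtain ⟨t, ⟨⟨ht1, ht2⟩, ht3⟩, ht4⟩ :=
    ((((h1.and h2).and h3).filter_mono nhdsWithin_le_nhds).and h4).exists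
  -- use connectability for shift s = -t
  obtain ⟨B, hBconn, hBsub1, hBsub2⟩ := hconn (-t)
  have key : ∀ x : ℝ, x - (-t) = x + t := fun x => by ring
  have haB : a ∈ B := by
    apply hBsub1
    have h1 : a ∈ Set.Icc a (a + δ) := ⟨le_refl a, by linarith⟩
    have h2 : a + t ∈ Set.Icc a (a + δ) := ⟨by linarith, by linarith⟩
    have h3 : ρ a < ρ (a + t) := hmono h1 h2 (by linarith)
    have h4 : ρ a = u a := heq a ⟨le_refl a, hab⟩
    simp only [Set.mem_setOf_eq, key]
    linarith
  have hx₀B : x₀ ∈ B := by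
    apply hBsub1
    simp only [Set.mem_setOf_eq, key]
    linarith
  have hord : B.OrdConnected := hBconn.ordConnected
  have hwB : w ∈ B := hord.out haB hx₀B ⟨haw, hwx₀.le⟩
  have := hBsub2 hwB
  simp only [Set.mem_setOf_eq, key] at this
  linarith
end

section
/- Let u, ρ : ℝ → ℝ with ρ continuous, and suppose that for every s ∈ ℝ the set {x ∈ ℝ : ρ(x − s) − u(x) > 0} is connectable. Let a ≤ b be such that ρ(x) = u(x) for all x ∈ [a,b], suppose there exists δ > 0 such that ρ is strictly increasing on [a − δ, a], and suppose there exists ε > 0 such that u(x) < ρ(x) for all x ∈ (a − ε, a). Then ρ(x) ≤ u(x) for all x > b. -/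
theorem steepness_case_1b (u ρ : ℝ → ℝ) (hρ_cont : Continuous ρ)
    (hconn : ∀ s : ℝ, Connectable (fun x => ρ (x - s) - u x))
    (a b : ℝ) (hab : a ≤ b)
    (heq : ∀ x ∈ Set.Icc a b, ρ x = u x)
    (hinc : ∃ δ > 0, StrictMonoOn ρ (Set.Icc (a - δ) a))
    (hside : ∃ ε > 0, ∀ x ∈ Set.Ioo (a - ε) a, u x < ρ x) :
    ∀ x : ℝ, b < x → ρ x ≤ u x := by
  intro x₀ hx₀
  by_contra hlt
  push_neg at hlt
  obtain ⟨δ, hδ, hmono⟩ := hinc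
  obtain ⟨ε, hε, hu⟩ := hside
  set p := a - min ε δ / 2 with hp
  have hmin : 0 < min ε δ := lt_min hε hδ
  have hpε : p ∈ Set.Ioo (a - ε) a := by
    constructor
    · have := min_le_left ε δ; simp only [hp]; linarith
    · simp only [hp]; linarith
  have hup : u p < ρ p := hu p hpε
  -- choose a small positive shift s
  have c1 : Filter.Tendsto (fun s : ℝ => ρ (p - s)) (nhds 0) (nhds (ρ p)) := by
    have : ContinuousAt (fun s : ℝ => ρ (p - s)) 0 :=
      (hρ_cont.comp (continuous_const.sub continuous_id)).continuousAt
    simpa [ContinuousAt] using this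
  have c2 : Filter.Tendsto (fun s : ℝ => ρ (x₀ - s)) (nhds 0) (nhds (ρ x₀)) := by
    have : ContinuousAt (fun s : ℝ => ρ (x₀ - s)) 0 :=
      (hρ_cont.comp (continuous_const.sub continuous_id)).continuousAt
    simpa [ContinuousAt] using this
  have e1 : ∀ᶠ s in nhds (0 : ℝ), u p < ρ (p - s) := c1.eventually (eventually_gt_nhds hup)
  have e2 : ∀ᶠ s in nhds (0 : ℝ), u x₀ < ρ (x₀ - s) := c2.eventually (eventually_gt_nhds hlt)
  have e3 : ∀ᶠ s in nhdsWithin (0 : ℝ) (Set.Ioi 0), s ∈ Set.Ioo (0 : ℝ) δ := by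
    have : Set.Ioo (0 : ℝ) δ ∈ nhdsWithin (0 : ℝ) (Set.Ioi 0) := Ioo_mem_nhdsGT_of_mem ⟨le_refl _, hδ⟩
    exact this
  have := (((e1.and e2).filter_mono nhdsWithin_le_nhds).and e3).exists
  obtain ⟨s, ⟨hs1, hs2⟩, hs0, hsδ⟩ := this
  -- e_s is negative at a
  have ha_neg : ρ (a - s) < u a := by
    have h1 : a - s ∈ Set.Icc (a - δ) a := ⟨by linarith, by linarith⟩
    have h2 : a ∈ Set.Icc (a - δ) a := ⟨by linarith, le_refl _⟩
    have := hmono h1 h2 (by linarith)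
    have heqa : ρ a = u a := heq a ⟨le_refl _, hab⟩
    linarith
  obtain ⟨B, hB, hB1, hB2⟩ := hconn s
  have hpB : p ∈ B := hB1 (by simp only [Set.mem_setOf_eq]; linarith)
  have hxB : x₀ ∈ B := hB1 (by simp only [Set.mem_setOf_eq]; linarith)
  have haB : a ∈ B := by
    have := hB.ordConnected
    exact this.out hpB hxB ⟨le_of_lt hpε.2, by linarith⟩
  have := hB2 haB
  simp only [Set.mem_setOf_eq] at this
  linarith
end

section
/- Let u, ρ : ℝ → ℝ with ρ continuous, and suppose that for every s ∈ ℝ the set {x ∈ ℝ : ρ(x − s) − u(x) > 0} is connectable. Let a ≤ b be such that ρ(x) = u(x) for all x ∈ [a,b], suppose there exists δ > 0 such that ρ is strictly decreasing on [b − δ, b], and suppose there exists ε > 0 such that u(x) > ρ(x) for all x ∈ (a − ε, a) and ρ(x) < u(x) for all x ∈ (b, b + ε). Then ρ(x) ≤ u(x) for all x < a. -/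
theorem steepness_case_2a (u ρ : ℝ → ℝ) (hρ_cont : Continuous ρ)
    (hconn : ∀ s : ℝ, Connectable (fun x => ρ (x - s) - u x))
    (a b : ℝ) (hab : a ≤ b)
    (heq : ∀ x ∈ Set.Icc a b, ρ x = u x)
    (hdec : ∃ δ > 0, StrictAntiOn ρ (Set.Icc (b - δ) b))
    (hsides : ∃ ε > 0, (∀ x ∈ Set.Ioo (a - ε) a, ρ x < u x) ∧
      (∀ x ∈ Set.Ioo b (b + ε), ρ x < u x)) :
    ∀ x : ℝ, x < a → ρ x ≤ u x := by
  intro x₀ hx₀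
  by_contra hcon
  push_neg at hcon
  obtain ⟨δ, hδ, hanti⟩ := hdec
  obtain ⟨ε, hε, hleft, _⟩ := hsides
  obtain ⟨q, hq1, hq2⟩ := exists_between (show max x₀ (a - ε) < a from max_lt hx₀ (by linarith))
  have hqε : ρ q < u q := hleft q ⟨lt_of_le_of_lt (le_max_right _ _) hq1, hq2⟩
  have hqx : x₀ < q := lt_of_le_of_lt (le_max_left _ _) hq1
  have c1 : Filter.Tendsto (fun s : ℝ => ρ (x₀ - s)) (nhds 0) (nhds (ρ x₀)) := by
    have h : Continuous (fun s : ℝ => ρ (x₀ - s)) :=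
      hρ_cont.comp (continuous_const.sub continuous_id)
    simpa using h.tendsto 0
  have c2 : Filter.Tendsto (fun s : ℝ => ρ (q - s)) (nhds 0) (nhds (ρ q)) := by
    have h : Continuous (fun s : ℝ => ρ (q - s)) :=
      hρ_cont.comp (continuous_const.sub continuous_id)
    simpa using h.tendsto 0
  have e1 : ∀ᶠ s in nhds (0 : ℝ), u x₀ < ρ (x₀ - s) := c1.eventually_const_lt hcon
  have e2 : ∀ᶠ s in nhds (0 : ℝ), ρ (q - s) < u q := c2.eventually_lt_const hqε
  have e3 : Set.Ioo (0 : ℝ) δ ∈ nhdsWithin (0 : ℝ) (Set.Ioi 0) :=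
    Ioo_mem_nhdsGT_of_mem ⟨le_refl 0, hδ⟩
  obtain ⟨s, ⟨hs1, hs2⟩, hs3, hs4⟩ :=
    ((((e1.and e2).filter_mono nhdsWithin_le_nhds).and e3).exists :
      ∃ s : ℝ, (u x₀ < ρ (x₀ - s) ∧ ρ (q - s) < u q) ∧ s ∈ Set.Ioo (0 : ℝ) δ)
  obtain ⟨B, hB, hBpos, hBnn⟩ := hconn s
  have hub : u b = ρ b := (heq b ⟨hab, le_refl b⟩).symm
  have hbB : b ∈ B := hBpos (by
    simp only [Set.mem_setOf_eq, sub_pos, hub]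
    exact hanti ⟨by linarith, by linarith⟩ ⟨by linarith, le_refl b⟩ (by linarith))
  have hxB : x₀ ∈ B := hBpos (by simp only [Set.mem_setOf_eq]; linarith)
  have hqB : q ∈ B := hB.ordConnected.out hxB hbB ⟨le_of_lt hqx, by linarith⟩
  have := hBnn hqB
  simp only [Set.mem_setOf_eq] at this
  linarith
end

section
/- Let u, ρ : ℝ → ℝ with ρ continuous, and suppose that for every s ∈ ℝ the set {x ∈ ℝ : ρ(x − s) − u(x) > 0} is connectable. Let a ≤ b be such that ρ(x) = u(x) for all x ∈ [a,b], suppose there exists δ > 0 such that ρ is strictly decreasing on [b, b + δ], and suppose there exists ε > 0 such that u(x) < ρ(x) for all x ∈ (b, b + ε). Then ρ(x) ≤ u(x) for all x < a. -/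
theorem steepness_case_2b (u ρ : ℝ → ℝ) (hρ_cont : Continuous ρ)
    (hconn : ∀ s : ℝ, Connectable (fun x => ρ (x - s) - u x))
    (a b : ℝ) (hab : a ≤ b)
    (heq : ∀ x ∈ Set.Icc a b, ρ x = u x)
    (hdec : ∃ δ > 0, StrictAntiOn ρ (Set.Icc b (b + δ)))
    (hside : ∃ ε > 0, ∀ x ∈ Set.Ioo b (b + ε), u x < ρ x) :
    ∀ x : ℝ, x < a → ρ x ≤ u x := by
  intro x₀ hx₀a
  by_contra hlt
  push_neg at hlt
  obtain ⟨δ, hδ, hρdec⟩ := hdec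
  obtain ⟨ε, hε, hu⟩ := hside
  have hmin : 0 < min δ ε := lt_min hδ hε
  set x₁ : ℝ := b + min δ ε / 2 with hx₁
  have hbx₁ : b < x₁ := by simp only [hx₁]; linarith
  have hx₁ε : x₁ < b + ε := by
    have := min_le_right δ ε
    simp only [hx₁]; linarith
  have hux₁ : u x₁ < ρ x₁ := hu x₁ ⟨hbx₁, hx₁ε⟩
  -- continuity: for small t > 0 the shifted inequalities persist
  have key : ∀ y : ℝ, u y < ρ y → ∀ᶠ t in nhdsWithin (0:ℝ) (Set.Ioi 0),
      u y < ρ (y + t) := by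
    intro y hy
    have hc : Filter.Tendsto (fun t : ℝ => ρ (y + t)) (nhds 0) (nhds (ρ y)) := by
      have : Filter.Tendsto (fun t : ℝ => y + t) (nhds 0) (nhds y) := by
        simpa using (continuous_add_left y).tendsto (0:ℝ)
      exact (hρ_cont.tendsto y).comp this
    exact (hc.eventually (eventually_gt_nhds hy)).filter_mono nhdsWithin_le_nhds
  have hsmall : ∀ᶠ t in nhdsWithin (0:ℝ) (Set.Ioi 0), t ∈ Set.Ioo (0:ℝ) δ := by
    have : Set.Ioo (0:ℝ) δ ∈ nhdsWithin (0:ℝ) (Set.Ioi 0) :=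
      Ioo_mem_nhdsGT_of_mem ⟨le_refl 0, hδ⟩
    exact this
  obtain ⟨t, ht₀, ht₁, htδ⟩ := ((key x₀ hlt).and ((key x₁ hux₁).and hsmall)).exists
  obtain ⟨htpos, htδ'⟩ := htδ
  -- use connectability for shift -t
  obtain ⟨B, hBconn, hpos, hnonneg⟩ := hconn (-t)
  have hx₀B : x₀ ∈ B := by
    apply hpos
    show 0 < ρ (x₀ - (-t)) - u x₀
    rw [sub_neg_eq_add]
    linarith
  have hx₁B : x₁ ∈ B := by
    apply hpos
    show 0 < ρ (x₁ - (-t)) - u x₁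
    rw [sub_neg_eq_add]
    linarith
  have hbB : b ∈ B := by
    have hord : B.OrdConnected := hBconn.ordConnected
    exact hord.out hx₀B hx₁B ⟨by linarith, le_of_lt hbx₁⟩
  have hbnn : 0 ≤ ρ (b - (-t)) - u b := hnonneg hbB
  rw [sub_neg_eq_add] at hbnn
  have hub : ρ b = u b := heq b ⟨hab, le_refl b⟩
  have hρb : ρ (b + t) < ρ b :=
    hρdec ⟨le_refl b, by linarith⟩ ⟨by linarith, by linarith⟩ (by linarith)
  linarith
end
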